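/- arXiv:1803.05051 — 6 statements merged into one kernel-verified Lean document; each statement's English description precedes it below -/
import Mathlib

section
/- For all integers k ≥ 2, ℓ ≥ 3, and r ≥ 2, the multicolor Ramsey number of the k-uniform loose path of length ℓ satisfies R(P_ℓ^(k); r) ≤ (k−1)ℓr. Equivalently, for every n ≥ (k−1)ℓr, every coloring of the k-element subsets of an n-element set with r colors yields a monochromatic copy of P_ℓ^(k). -/
/-!
Induction on the uniformity `k`. For graphs, a colour class without a path of `ℓ` edges has at
most `(ℓ - 1) N / 2` edges by the Erdős–Gallai theorem, so the `r` classes cannot cover the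
`N (N - 1) / 2` pairs of `N ≥ r ℓ` vertices. For the step from `k` to `k + 1`, set aside a
reservoir `X` of `r (ℓ - 1) + 1` vertices and give each `k`-set `S` of the other vertices a
colour that at least `ℓ` of the sets `insert x S`, `x ∈ X`, receive (pigeonhole). A monochromatic
loose `k`-path for this colouring becomes one for `k + 1` by adding to its `i`-th edge a vertex
`x i ∈ X`, the `x i` being distinct by Hall's theorem. Altogether
`r ℓ + (k - 2) (r (ℓ - 1) + 1) ≤ (k - 1) ℓ r` vertices suffice.
-/

/-- The coloring `χ` of the `k`-element subsets contains a monochromatic copy of the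
`k`-uniform loose path of length `ℓ`: there are a color `c` and distinct vertices
`f 0, …, f ((k-1)ℓ)` such that each of the `ℓ` consecutive edges
`{f (i(k-1)), …, f (i(k-1)+k-1)}` (consecutive edges sharing exactly one vertex)
receives color `c`. -/
def HasMonoLoosePath {α : Type} [DecidableEq α] {r : ℕ} (k ℓ : ℕ)
    (χ : Finset α → Fin r) : Prop :=
  ∃ c : Fin r, ∃ f : ℕ → α, Set.InjOn f (Set.Iio ((k - 1) * ℓ + 1)) ∧
    ∀ i < ℓ, χ ((Finset.Ico (i * (k - 1)) (i * (k - 1) + k)).image f) = c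

open Finset

namespace LoosePathRamsey

section Paths

variable {α : Type*} (G : SimpleGraph α)

structure IsPathIn (D : Finset α) (m : ℕ) (g : ℕ → α) : Prop where
  injOn : Set.InjOn g (Set.Iio (m + 1))
  mem : ∀ i ≤ m, g i ∈ D
  adj : ∀ i < m, G.Adj (g i) (g (i + 1))

namespace IsPathIn

variable {G} {D : Finset α} {m : ℕ} {g : ℕ → α}

theorem mono {D' : Finset α} (h : IsPathIn G D m g) (hD : D ⊆ D') : IsPathIn G D' m g :=
  ⟨h.injOn, fun i hi => hD (h.mem i hi), h.adj⟩

theorem const {v : α} (hv : v ∈ D) : IsPathIn G D 0 fun _ => v where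
  injOn a ha b hb _ := by simp only [zero_add, Set.mem_Iio] at ha hb; omega
  mem _ _ := hv
  adj _ h := absurd h (Nat.not_lt_zero _)

theorem reverse (h : IsPathIn G D m g) : IsPathIn G D m fun s => g (m - s) where
  injOn a ha b hb hab := by
    simp only [Set.mem_Iio] at ha hb
    have := h.injOn (Set.mem_Iio.2 (by omega : m - a < m + 1))
      (Set.mem_Iio.2 (by omega : m - b < m + 1)) hab
    omega
  mem _ _ := h.mem _ (Nat.sub_le _ _)
  adj i hi := by
    have := h.adj (m - (i + 1)) (by omega)
    rwa [show m - (i + 1) + 1 = m - i by omega, G.adj_comm] at this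

theorem cons (h : IsPathIn G D m g) {u : α} (hu : u ∈ D) (hne : ∀ i ≤ m, g i ≠ u)
    (hadj : G.Adj u (g 0)) : IsPathIn G D (m + 1) fun s => if s = 0 then u else g (s - 1) where
  injOn a ha b hb hab := by
    simp only [Set.mem_Iio] at ha hb
    rcases a with _ | a <;> rcases b with _ | b <;> simp only [↓reduceIte, add_tsub_cancel_right,
      Nat.add_one_ne_zero] at hab
    · rfl
    · exact absurd hab.symm (hne b (by omega))
    · exact absurd hab (hne a (by omega))
    · rw [h.injOn (Set.mem_Iio.2 (by omega)) (Set.mem_Iio.2 (by omega)) hab]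
  mem i hi := by
    split_ifs
    exacts [hu, h.mem _ (by omega)]
  adj i hi := by
    rcases i with _ | i
    · simpa using hadj
    · simpa using h.adj i (by omega)

theorem exists_eq_of_adj_head (h : IsPathIn G D m g) (hmax : ∀ g', ¬IsPathIn G D (m + 1) g')
    {u : α} (hu : u ∈ D) (hadj : G.Adj (g 0) u) : ∃ j < m, g (j + 1) = u := by
  by_contra! hcon
  refine hmax _ (h.cons hu (fun i hi => ?_) hadj.symm)
  rcases i with _ | j
  · exact hadj.ne
  · exact hcon j (by omega)

theorem exists_eq_of_adj_last (h : IsPathIn G D m g) (hmax : ∀ g', ¬IsPathIn G D (m + 1) g')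
    {u : α} (hu : u ∈ D) (hadj : G.Adj (g m) u) : ∃ j < m, g j = u := by
  obtain ⟨j, hj, rfl⟩ := h.reverse.exists_eq_of_adj_head hmax hu (by simpa using hadj)
  exact ⟨m - (j + 1), by omega, rfl⟩

/-- Pósa rotation along the edge `g i g m`: the path `g 0, …, g i, g m, g (m - 1), …, g (i + 1)`. -/
theorem rotate (h : IsPathIn G D m g) {i : ℕ} (hi : i < m) (hadj : G.Adj (g i) (g m)) :
    IsPathIn G D m fun s => g (if s ≤ i then s else m + i + 1 - s) where
  injOn a ha b hb hab := by
    simp only [Set.mem_Iio] at ha hb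
    have := h.injOn (Set.mem_Iio.2 (by split_ifs <;> omega))
      (Set.mem_Iio.2 (by split_ifs <;> omega)) hab
    split_ifs at this <;> omega
  mem s hs := h.mem _ (by split_ifs <;> omega)
  adj s hs := by
    rcases lt_trichotomy s i with hsi | rfl | hsi
    · simpa [hsi.le, Nat.add_one_le_iff.2 hsi] using h.adj s (by omega)
    · simpa using hadj
    · have := h.adj (m + i - s) (by omega)
      rw [G.adj_comm, show m + i - s + 1 = m + i + 1 - s by omega] at this
      simpa [hsi.not_ge, show ¬ s + 1 ≤ i by omega, show m + i + 1 - (s + 1) = m + i - s by omega]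

theorem shift_mod (h : IsPathIn G D m g) (hclose : G.Adj (g m) (g 0)) (o : ℕ) :
    IsPathIn G D m fun s => g ((o + s) % (m + 1)) where
  injOn a ha b hb hab := by
    simp only [Set.mem_Iio] at ha hb
    have := h.injOn (Set.mem_Iio.2 (Nat.mod_lt _ (by omega : 0 < m + 1)))
      (Set.mem_Iio.2 (Nat.mod_lt _ (by omega : 0 < m + 1))) hab
    exact (Nat.ModEq.add_left_cancel' o this).eq_of_lt_of_lt ha hb
  mem _ _ := h.mem _ (Nat.lt_succ_iff.1 (Nat.mod_lt _ (by omega : 0 < m + 1)))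
  adj s _ := by
    have hlt := Nat.mod_lt (o + s) (by omega : 0 < m + 1)
    rw [← add_assoc, ← Nat.mod_add_mod (o + s)]
    rcases (Nat.lt_succ_iff.1 hlt).lt_or_eq with hlt' | heq
    · rw [Nat.mod_eq_of_lt (by omega : (o + s) % (m + 1) + 1 < m + 1)]
      exact h.adj _ hlt'
    · rw [heq, Nat.mod_self]
      exact hclose

end IsPathIn

end Paths

theorem _root_.Nat.exists_lt_and_not_succ {P : ℕ → Prop} {n : ℕ} (h0 : P 0) (hn : ¬P n) :
    ∃ m < n, P m ∧ ¬P (m + 1) := by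
  induction n with
  | zero => exact absurd h0 hn
  | succ n ih =>
    by_cases h : P n
    · exact ⟨n, lt_add_one n, h, hn⟩
    · obtain ⟨m, hm, hPm, hm'⟩ := ih h
      exact ⟨m, by omega, hPm, hm'⟩

section ErdosGallai

variable {α : Type*} (G : SimpleGraph α) [DecidableRel G.Adj]

theorem card_interedges_self_le (C : Finset α) : #(G.interedges C C) ≤ #C * (#C - 1) :=
  calc #(G.interedges C C) ≤ #C.offDiag := card_le_card fun p hp => by
        rw [G.mem_interedges_iff] at hp
        exact mem_offDiag.2 ⟨hp.1, hp.2.1, hp.2.2.ne⟩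
    _ = #C * (#C - 1) := by rw [offDiag_card, Nat.mul_sub_one]

variable [DecidableEq α]

namespace IsPathIn

variable {G} {D : Finset α} {m : ℕ} {g : ℕ → α}

theorem exists_rotation_index (h : IsPathIn G D m g) (hmax : ∀ g', ¬IsPathIn G D (m + 1) g')
    (hdeg : m < #{u ∈ D | G.Adj (g 0) u} + #{u ∈ D | G.Adj (g m) u}) :
    ∃ i < m, G.Adj (g 0) (g (i + 1)) ∧ G.Adj (g i) (g m) := by
  have hhead : {u ∈ D | G.Adj (g 0) u} ⊆
      {i ∈ range m | G.Adj (g 0) (g (i + 1))}.image fun i => g (i + 1) := by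
    intro u hu
    rw [mem_filter] at hu
    obtain ⟨j, hj, rfl⟩ := h.exists_eq_of_adj_head hmax hu.1 hu.2
    exact mem_image_of_mem _ (mem_filter.2 ⟨mem_range.2 hj, hu.2⟩)
  have hlast : {u ∈ D | G.Adj (g m) u} ⊆ {i ∈ range m | G.Adj (g i) (g m)}.image g := by
    intro u hu
    rw [mem_filter] at hu
    obtain ⟨j, hj, rfl⟩ := h.exists_eq_of_adj_last hmax hu.1 hu.2
    exact mem_image_of_mem _ (mem_filter.2 ⟨mem_range.2 hj, hu.2.symm⟩)
  have := (card_le_card hhead).trans card_image_le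
  have := (card_le_card hlast).trans card_image_le
  obtain ⟨i, hi⟩ := inter_nonempty_of_card_lt_card_add_card
    (filter_subset (fun i => G.Adj (g 0) (g (i + 1))) (range m))
    (filter_subset (fun i => G.Adj (g i) (g m)) (range m)) (by rw [card_range]; omega)
  simp only [mem_inter, mem_filter, mem_range] at hi
  exact ⟨i, hi.1.1, hi.1.2, hi.2.2⟩

end IsPathIn

variable {G} in
theorem exists_separated_subset_card_le {D : Finset α} {ℓ : ℕ}
    (hD : ∀ g, ¬IsPathIn G D ℓ g) (hdeg : ∀ v ∈ D, ℓ ≤ 2 * #{u ∈ D | G.Adj v u})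
    (hne : D.Nonempty) :
    ∃ C ⊆ D, C.Nonempty ∧ #C ≤ ℓ ∧ ∀ u ∈ D \ C, ∀ v ∈ C, ¬G.Adj u v := by
  obtain ⟨v, hv⟩ := hne
  obtain ⟨m, hmℓ, ⟨g, hg⟩, hmax⟩ := Nat.exists_lt_and_not_succ
    (P := fun j => ∃ g, IsPathIn G D j g) ⟨_, IsPathIn.const hv⟩ fun ⟨g, hg⟩ => hD g hg
  push Not at hmax
  obtain ⟨i, hi, hhead, hlast⟩ := hg.exists_rotation_index hmax (by
    have := hdeg _ (hg.mem 0 (Nat.zero_le _))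
    have := hdeg _ (hg.mem m le_rfl)
    omega)
  set c := fun s => g (if s ≤ i then s else m + i + 1 - s)
  have hc : IsPathIn G D m c := hg.rotate hi hlast
  have hclose : G.Adj (c m) (c 0) := by
    simpa [c, hi.not_ge, show m + i + 1 - m = i + 1 by omega] using hhead.symm
  refine ⟨(range (m + 1)).image c, ?_, ⟨c 0, mem_image_of_mem _ (by simp)⟩,
    card_image_le.trans (by rw [card_range]; omega), ?_⟩
  · exact image_subset_iff.2 fun s hs => hc.mem s (Nat.lt_succ_iff.1 (mem_range.1 hs))
  · rintro u hu _ hv' hadj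
    rw [mem_sdiff] at hu
    obtain ⟨o, ho, rfl⟩ := mem_image.1 hv'
    refine hmax _ ((hc.shift_mod hclose o).cons hu.1 (fun s _ hs => hu.2 ?_) ?_)
    · rw [← hs]
      exact mem_image_of_mem _ (mem_range.2 (Nat.mod_lt _ (by omega)))
    · simpa [Nat.mod_eq_of_lt (mem_range.1 ho)] using hadj

theorem card_interedges_le_erase (D : Finset α) (v : α) :
    #(G.interedges D D) ≤ #(G.interedges (D.erase v) (D.erase v)) + 2 * #{u ∈ D | G.Adj v u} := by
  set N := {u ∈ D | G.Adj v u}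
  have hsub : G.interedges D D ⊆
      G.interedges (D.erase v) (D.erase v) ∪ (N.image (v, ·) ∪ N.image (·, v)) := by
    rintro ⟨a, b⟩ hab
    rw [G.mk_mem_interedges_iff] at hab
    simp only [mem_union, mem_image, G.mk_mem_interedges_iff, mem_erase, N, mem_filter,
      Prod.mk.injEq]
    by_cases ha : a = v
    · exact .inr (.inl ⟨b, ⟨hab.2.1, ha ▸ hab.2.2⟩, ha.symm, rfl⟩)
    by_cases hb : b = v
    · exact .inr (.inr ⟨a, ⟨hab.1, hb ▸ hab.2.2.symm⟩, rfl, hb.symm⟩)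
    exact .inl ⟨⟨ha, hab.1⟩, ⟨hb, hab.2.1⟩, hab.2.2⟩
  calc #(G.interedges D D)
      ≤ #(G.interedges (D.erase v) (D.erase v)) + (#(N.image (v, ·)) + #(N.image (·, v))) :=
        (card_le_card hsub).trans ((card_union_le _ _).trans (Nat.add_le_add_left (card_union_le _ _) _))
    _ ≤ #(G.interedges (D.erase v) (D.erase v)) + (#N + #N) := by
        gcongr <;> exact card_image_le
    _ = _ := by ring

theorem interedges_subset_union_sdiff {C D : Finset α} (hsep : ∀ u ∈ D \ C, ∀ v ∈ C, ¬G.Adj u v) :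
    G.interedges D D ⊆ G.interedges C C ∪ G.interedges (D \ C) (D \ C) := by
  rintro ⟨a, b⟩ hab
  rw [G.mk_mem_interedges_iff] at hab
  simp only [mem_union, G.mk_mem_interedges_iff, mem_sdiff]
  by_cases ha : a ∈ C
  · exact .inl ⟨ha, by_contra fun hb => hsep b (mem_sdiff.2 ⟨hab.2.1, hb⟩) a ha hab.2.2.symm,
      hab.2.2⟩
  · exact .inr ⟨⟨hab.1, ha⟩, ⟨hab.2.1, fun hb => hsep a (mem_sdiff.2 ⟨hab.1, ha⟩) b hb hab.2.2⟩,
      hab.2.2⟩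

/-- The Erdős–Gallai theorem, counting ordered pairs. Either some vertex has degree `< ℓ / 2` and
is deleted, or a longest path closes into a cycle by a rotation and the cycle's vertices form a
separate part with at most `ℓ` vertices. -/
theorem card_interedges_le_of_forall_not_isPathIn {ℓ : ℕ} (D : Finset α)
    (hD : ∀ g, ¬IsPathIn G D ℓ g) : #(G.interedges D D) ≤ (ℓ - 1) * #D := by
  induction D using Finset.strongInduction with
  | H D ih =>
  by_cases hlow : ∃ v ∈ D, 2 * #{u ∈ D | G.Adj v u} < ℓ
  · obtain ⟨v, hv, hdeg⟩ := hlow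
    have h1 := ih _ (erase_ssubset hv) fun g hg => hD g (hg.mono (erase_subset v D))
    have h2 := card_interedges_le_erase G D v
    rw [← card_erase_add_one hv, mul_add_one]
    omega
  · push Not at hlow
    obtain rfl | hne := D.eq_empty_or_nonempty
    · simp
    obtain ⟨C, hCD, hCne, hCℓ, hsep⟩ := exists_separated_subset_card_le hD hlow hne
    have h1 := ih _ (sdiff_ssubset hCD hCne) fun g hg => hD g (hg.mono sdiff_subset)
    have h2 := card_le_card (interedges_subset_union_sdiff G hsep)
    have h3 := card_union_le (G.interedges C C) (G.interedges (D \ C) (D \ C))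
    have h4 : #(G.interedges C C) ≤ (ℓ - 1) * #C :=
      calc #(G.interedges C C) ≤ #C * (#C - 1) := card_interedges_self_le G C
        _ ≤ #C * (ℓ - 1) := Nat.mul_le_mul_left _ (by omega)
        _ = (ℓ - 1) * #C := mul_comm _ _
    rw [← card_sdiff_add_card_eq_card hCD, mul_add]
    omega

end ErdosGallai

section Coloring

variable {α : Type*} [DecidableEq α] {r : ℕ}

def colorGraph (χ : Finset α → Fin r) (c : Fin r) : SimpleGraph α where
  Adj x y := x ≠ y ∧ χ {x, y} = c
  symm := ⟨fun x y h => ⟨h.1.symm, by rw [pair_comm]; exact h.2⟩⟩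
  loopless := ⟨fun x h => h.1 rfl⟩

@[simp]
theorem colorGraph_adj {χ : Finset α → Fin r} {c : Fin r} {x y : α} :
    (colorGraph χ c).Adj x y ↔ x ≠ y ∧ χ {x, y} = c :=
  Iff.rfl

instance (χ : Finset α → Fin r) (c : Fin r) : DecidableRel (colorGraph χ c).Adj :=
  fun _ _ => inferInstanceAs (Decidable (_ ∧ _))

theorem sum_card_interedges_colorGraph (χ : Finset α → Fin r) (V : Finset α) :
    ∑ c, #((colorGraph χ c).interedges V V) = #V * (#V - 1) := by
  rw [Nat.mul_sub_one, ← offDiag_card,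
    card_eq_sum_card_fiberwise (f := fun p => χ {p.1, p.2}) (t := univ) fun _ _ => mem_univ _]
  refine sum_congr rfl fun c _ => congrArg card ?_
  ext ⟨a, b⟩
  simp [SimpleGraph.mk_mem_interedges_iff, colorGraph_adj, and_assoc]

theorem exists_isPathIn_colorGraph (hr : 2 ≤ r) {ℓ : ℕ} (hℓ : 0 < ℓ) (χ : Finset α → Fin r)
    (V : Finset α) (hV : r * ℓ ≤ #V) : ∃ c g, IsPathIn (colorGraph χ c) V ℓ g := by
  by_contra! h
  have hsum : #V * (#V - 1) ≤ #V * (r * (ℓ - 1)) :=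
    calc #V * (#V - 1) = ∑ c, #((colorGraph χ c).interedges V V) :=
          (sum_card_interedges_colorGraph χ V).symm
      _ ≤ ∑ _c : Fin r, (ℓ - 1) * #V :=
          sum_le_sum fun c _ => card_interedges_le_of_forall_not_isPathIn _ V (h c)
      _ = #V * (r * (ℓ - 1)) := by
          rw [sum_const, card_univ, Fintype.card_fin, smul_eq_mul]; ring
  have hrℓ : r ≤ r * ℓ := Nat.le_mul_of_pos_right r hℓ
  have := Nat.le_of_mul_le_mul_left hsum (by omega)
  rw [Nat.mul_sub_one] at this
  omega

theorem exists_injOn_forall_mem {ℓ : ℕ} (hℓ : 0 < ℓ) (T : ℕ → Finset α)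
    (hT : ∀ i < ℓ, ℓ ≤ #(T i)) : ∃ x : ℕ → α, Set.InjOn x (Set.Iio ℓ) ∧ ∀ i < ℓ, x i ∈ T i := by
  obtain ⟨y, hy_inj, hy⟩ := (all_card_le_biUnion_card_iff_exists_injective
    fun i : Fin ℓ => T i).1 fun s => by
      rcases s.eq_empty_or_nonempty with rfl | ⟨i, hi⟩
      · simp
      · calc #s ≤ ℓ := (card_le_univ s).trans_eq (Fintype.card_fin ℓ)
          _ ≤ #(T i) := hT i i.2
          _ ≤ _ := card_le_card (subset_biUnion_of_mem (fun i : Fin ℓ => T i) hi)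
  refine ⟨fun i => y ⟨min i (ℓ - 1), by omega⟩, fun a ha b hb hab => ?_, fun i hi => ?_⟩
  · simp only [Set.mem_Iio] at ha hb
    have := Fin.ext_iff.1 (hy_inj hab)
    simp only at this
    omega
  · simpa [show min i (ℓ - 1) = i by omega] using hy ⟨i, hi⟩

end Coloring

section LoosePaths

variable {α : Type*}

def loosePathEdge [DecidableEq α] (m : ℕ) (f : ℕ → α) (i : ℕ) : Finset α :=
  (Ico (i * m) (i * m + (m + 1))).image f

theorem loosePathEdge_eq_image_range [DecidableEq α] (m : ℕ) (f : ℕ → α) (i : ℕ) :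
    loosePathEdge m f i = (range (m + 1)).image fun s => f (i * m + s) := by
  have := image_add_left_Ico 0 (m + 1) (i * m)
  rw [add_zero] at this
  rw [loosePathEdge, range_eq_Ico, ← this, image_image]
  rfl

theorem loosePathEdge_one [DecidableEq α] (f : ℕ → α) (i : ℕ) :
    loosePathEdge 1 f i = {f i, f (i + 1)} := by
  simp [loosePathEdge_eq_image_range, range_add_one, pair_comm]

theorem _root_.Nat.div_mod_mul_add {m s : ℕ} (q : ℕ) (hs : s < m) :
    (q * m + s) / m = q ∧ (q * m + s) % m = s :=
  (Nat.div_mod_unique (by omega)).2 ⟨by ring, hs⟩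

/-- Adds `x i` to the `i`-th edge of the loose path `f`, just before the vertex shared with the
next edge: positions `i (m + 1) + s` carry `f (i m + s)` for `s < m` and `x i` for `s = m`. -/
def interleave (m : ℕ) (f x : ℕ → α) (j : ℕ) : α :=
  if j % (m + 1) = m then x (j / (m + 1)) else f (j / (m + 1) * m + j % (m + 1))

theorem interleave_mul_add_of_lt {m s : ℕ} (f x : ℕ → α) (q : ℕ) (hs : s < m) :
    interleave m f x (q * (m + 1) + s) = f (q * m + s) := by
  obtain ⟨hq, hs'⟩ := Nat.div_mod_mul_add (m := m + 1) q (by omega : s < m + 1)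
  simp [interleave, hq, hs', hs.ne]

theorem interleave_mul_add_self (m : ℕ) (f x : ℕ → α) (q : ℕ) :
    interleave m f x (q * (m + 1) + m) = x q := by
  obtain ⟨hq, hs'⟩ := Nat.div_mod_mul_add (m := m + 1) q (by omega : m < m + 1)
  simp [interleave, hq, hs']

theorem loosePathEdge_interleave [DecidableEq α] {m : ℕ} (hm : 0 < m) (f x : ℕ → α) (i : ℕ) :
    loosePathEdge (m + 1) (interleave m f x) i = insert (x i) (loosePathEdge m f i) := by
  simp only [loosePathEdge_eq_image_range, range_add_one, image_insert]
  rw [interleave_mul_add_self, show i * (m + 1) + (m + 1) = (i + 1) * (m + 1) + 0 by ring,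
    interleave_mul_add_of_lt _ _ _ hm, show (i + 1) * m + 0 = i * m + m by ring,
    image_congr fun s hs => interleave_mul_add_of_lt f x i (mem_range.1 hs), insert_comm]

theorem div_lt_of_mod_eq {m ℓ j : ℕ} (hm : 0 < m) (hj : j < (m + 1) * ℓ + 1)
    (h : j % (m + 1) = m) : j / (m + 1) < ℓ := by
  have := Nat.div_add_mod j (m + 1)
  by_contra! hq
  nlinarith

theorem div_mul_add_mod_lt {m ℓ j : ℕ} (hj : j < (m + 1) * ℓ + 1) :
    j / (m + 1) * m + j % (m + 1) < m * ℓ + 1 := by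
  have := Nat.div_add_mod j (m + 1)
  have := Nat.mod_lt j (by omega : 0 < m + 1)
  rcases lt_or_ge (j / (m + 1)) ℓ with hq | hq
  · nlinarith
  · nlinarith

theorem injOn_interleave {m ℓ : ℕ} (hm : 0 < m) {f x : ℕ → α}
    (hf : Set.InjOn f (Set.Iio (m * ℓ + 1))) (hx : Set.InjOn x (Set.Iio ℓ))
    (hfx : ∀ i < ℓ, ∀ j < m * ℓ + 1, x i ≠ f j) :
    Set.InjOn (interleave m f x) (Set.Iio ((m + 1) * ℓ + 1)) := by
  intro a ha b hb hab
  simp only [Set.mem_Iio] at ha hb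
  rw [← Nat.div_add_mod a (m + 1), ← Nat.div_add_mod b (m + 1)]
  unfold interleave at hab
  split_ifs at hab with hA hB hB
  · rw [hA, hB, hx (div_lt_of_mod_eq hm ha hA) (div_lt_of_mod_eq hm hb hB) hab]
  · exact absurd hab (hfx _ (div_lt_of_mod_eq hm ha hA) _ (div_mul_add_mod_lt hb))
  · exact absurd hab.symm (hfx _ (div_lt_of_mod_eq hm hb hB) _ (div_mul_add_mod_lt ha))
  · have := hf (div_mul_add_mod_lt ha) (div_mul_add_mod_lt hb) hab
    have hA' : a % (m + 1) < m := by have := Nat.mod_lt a (by omega : 0 < m + 1); omega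
    have hB' : b % (m + 1) < m := by have := Nat.mod_lt b (by omega : 0 < m + 1); omega
    obtain ⟨hq, hs⟩ := Nat.div_mod_mul_add (a / (m + 1)) hA'
    obtain ⟨hq', hs'⟩ := Nat.div_mod_mul_add (b / (m + 1)) hB'
    rw [this] at hq hs
    rw [← hq, ← hs, hq', hs']

theorem mapsTo_interleave {m ℓ : ℕ} (hm : 0 < m) {f x : ℕ → α} {S : Set α}
    (hf : Set.MapsTo f (Set.Iio (m * ℓ + 1)) S) (hx : Set.MapsTo x (Set.Iio ℓ) S) :
    Set.MapsTo (interleave m f x) (Set.Iio ((m + 1) * ℓ + 1)) S := by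
  intro j hj
  rw [Set.mem_Iio] at hj
  unfold interleave
  split_ifs with h
  exacts [hx (div_lt_of_mod_eq hm hj h), hf (div_mul_add_mod_lt hj)]

end LoosePaths

theorem exists_monochromatic_loosePath {α : Type*} [DecidableEq α] {r ℓ : ℕ} (hr : 2 ≤ r)
    (hℓ : 0 < ℓ) (m : ℕ) (χ : Finset α → Fin r) (V : Finset α)
    (hV : r * ℓ + m * (r * (ℓ - 1) + 1) ≤ #V) :
    ∃ c f, Set.InjOn f (Set.Iio ((m + 1) * ℓ + 1)) ∧ Set.MapsTo f (Set.Iio ((m + 1) * ℓ + 1)) V ∧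
      ∀ i < ℓ, χ (loosePathEdge (m + 1) f i) = c := by
  induction m generalizing χ V with
  | zero =>
    obtain ⟨c, g, hg⟩ := exists_isPathIn_colorGraph hr hℓ χ V (by simpa using hV)
    refine ⟨c, g, by simpa using hg.injOn, fun j hj => hg.mem j ?_, fun i hi => ?_⟩
    · simp only [zero_add, one_mul, Set.mem_Iio] at hj
      omega
    · rw [loosePathEdge_one]
      exact (hg.adj i hi).2
  | succ m ih =>
    obtain ⟨X, hXV, hX⟩ := exists_subset_card_eq (s := V) (n := r * (ℓ - 1) + 1) (by nlinarith)
    have hpopular : ∀ S : Finset α, ∃ c, ℓ ≤ #{x ∈ X | χ (insert x S) = c} := fun S => by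
      obtain ⟨c, -, hc⟩ := exists_lt_card_fiber_of_mul_lt_card_of_maps_to
        (s := X) (f := fun x => χ (insert x S)) (t := univ) (n := ℓ - 1) (fun _ _ => mem_univ _)
        (by simp [hX])
      exact ⟨c, by omega⟩
    choose χ' hχ' using hpopular
    obtain ⟨c, f, hf_inj, hf_mem, hf_col⟩ := ih χ' (V \ X) (by
      rw [card_sdiff_of_subset hXV, hX]
      rw [add_one_mul] at hV
      omega)
    obtain ⟨x, hx_inj, hx⟩ := exists_injOn_forall_mem hℓ
      (fun i => {y ∈ X | χ (insert y (loosePathEdge (m + 1) f i)) = c})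
      fun i hi => hf_col i hi ▸ hχ' _
    simp only [mem_filter] at hx
    refine ⟨c, interleave (m + 1) f x, injOn_interleave m.succ_pos hf_inj hx_inj ?_,
      mapsTo_interleave m.succ_pos (hf_mem.mono_right sdiff_subset) fun i hi => hXV (hx i hi).1,
      fun i hi => by rw [loosePathEdge_interleave m.succ_pos]; exact (hx i hi).2⟩
    intro i hi j hj hij
    exact (mem_sdiff.1 (hf_mem hj)).2 (hij ▸ (hx i hi).1)

end LoosePathRamsey

theorem loosePath_ramsey_upper (k ℓ r : ℕ) (hk : 2 ≤ k) (hl : 3 ≤ ℓ) (hr : 2 ≤ r)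
    (n : ℕ) (hn : (k - 1) * ℓ * r ≤ n) (χ : Finset (Fin n) → Fin r) :
    HasMonoLoosePath k ℓ χ := by
  obtain ⟨m, rfl⟩ : ∃ m, k = m + 2 := ⟨k - 2, by omega⟩
  have hV : r * ℓ + m * (r * (ℓ - 1) + 1) ≤ #(univ : Finset (Fin n)) := by
    have : r * (ℓ - 1) + 1 ≤ r * ℓ := by
      rw [Nat.mul_sub_one]
      have := Nat.le_mul_of_pos_right r (by omega : 0 < ℓ)
      omega
    calc r * ℓ + m * (r * (ℓ - 1) + 1) ≤ r * ℓ + m * (r * ℓ) := by gcongr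
      _ = (m + 2 - 1) * ℓ * r := by rw [show m + 2 - 1 = m + 1 from rfl]; ring
      _ ≤ #(univ : Finset (Fin n)) := by simpa using hn
  obtain ⟨c, f, hf, -, hχ⟩ :=
    LoosePathRamsey.exists_monochromatic_loosePath hr (by omega) m χ univ hV
  exact ⟨c, f, hf, hχ⟩
end

section
/- Let k ≥ 3 and r ≥ 2 be integers, let H be a selfish k-uniform hypergraph, and let G = G_H be the (k−1)-uniform hypergraph obtained from H by removing one vertex of degree one from each edge of H. Suppose m is an integer such that every coloring of the (k−1)-element subsets of an m-element set with r colors yields a monochromatic copy of G. Then, for n = m + r(|E(H)|−1) + 1, every coloring of the k-element subsets of an n-element set with r colors yields a monochromatic copy of H. In particular, R(H; r) ≤ R(G; r) + r(|E(H)|−1) + 1. -/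
/-!
Split the `n = m₀ + r(|E(H)| - 1) + 1` vertices into a base copy of `Fin m₀` and a reservoir
of `r(|E(H)| - 1) + 1` further vertices. Colour a `(k-1)`-set `S` of the base by a colour `c`
for which at least `|E(H)|` reservoir vertices `y` give `S ∪ {y}` colour `c` (pigeonhole).
A monochromatic copy of `G_H` for this colouring leaves, for each of its edges, at least
`|E(H)|` admissible reservoir vertices, so by Hall's theorem the edges can be given distinct
ones; sending the degree-one vertex of each edge of `H` to its reservoir vertex extends the
copy of `G_H` to a monochromatic copy of `H`.
-/

open Finset Function

theorem Finset.exists_le_card_filter_eq_of_mul_pred_lt {α κ : Type*} [Fintype κ]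
    [DecidableEq κ] (s : Finset α) (φ : α → κ) {n : ℕ}
    (hs : Fintype.card κ * (n - 1) < #s) : ∃ c, n ≤ #{x ∈ s | φ x = c} := by
  obtain ⟨c, -, hc⟩ := exists_lt_card_fiber_of_mul_lt_card_of_maps_to
    (t := univ) (fun x _ => mem_univ (φ x)) (by rwa [card_univ])
  exact ⟨c, by omega⟩

theorem Finset.exists_injective_forall_mem_of_card_le {ι α : Type*} [Fintype ι] [DecidableEq α]
    (A : ι → Finset α) (hA : ∀ i, Fintype.card ι ≤ #(A i)) :
    ∃ x : ι → α, Injective x ∧ ∀ i, x i ∈ A i := by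
  refine (all_card_le_biUnion_card_iff_exists_injective A).1 fun s => ?_
  obtain rfl | ⟨i, hi⟩ := s.eq_empty_or_nonempty
  · simp
  · calc #s ≤ Fintype.card ι := card_le_univ s
      _ ≤ #(A i) := hA i
      _ ≤ #(s.biUnion A) := card_le_card (subset_biUnion_of_mem A hi)

section SelfishExtension

variable {ι V β : Type*} {H : ι → Finset V} {w : ι → V}

theorem injective_of_selfish (hw : ∀ i, w i ∈ H i) (hdeg : ∀ i j, w i ∈ H j → j = i) :
    Injective w := fun i j hij => hdeg j i (hij ▸ hw i)

variable [DecidableEq V]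

theorem not_exists_eq_of_mem_erase_of_selfish (hdeg : ∀ i j, w i ∈ H j → j = i) {i : ι} {v : V}
    (hv : v ∈ (H i).erase (w i)) : ¬∃ j, w j = v := by
  rintro ⟨j, rfl⟩
  obtain rfl := hdeg j i (mem_of_mem_erase hv)
  exact (mem_erase.1 hv).1 rfl

theorem image_extend_of_selfish [DecidableEq β]
    (hw : ∀ i, w i ∈ H i) (hdeg : ∀ i j, w i ∈ H j → j = i) (x : ι → β) (e : V → β) (i : ι) :
    (H i).image (extend w x e) = insert (x i) (((H i).erase (w i)).image e) := by
  conv_lhs => rw [← insert_erase (hw i)]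
  rw [image_insert, (injective_of_selfish hw hdeg).extend_apply]
  exact congrArg _ <| image_congr fun v hv =>
    extend_apply' _ _ _ (not_exists_eq_of_mem_erase_of_selfish hdeg hv)

theorem injOn_extend_of_selfish (hw : ∀ i, w i ∈ H i) (hdeg : ∀ i j, w i ∈ H j → j = i)
    {x : ι → β} {e : V → β} (hx : Injective x)
    (he : Set.InjOn e {v | ∃ i, v ∈ (H i).erase (w i)}) (hxe : ∀ i v, x i ≠ e v) :
    Set.InjOn (extend w x e) {v | ∃ i, v ∈ H i} := by
  have hwinj := injective_of_selfish hw hdeg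
  have split : ∀ v ∈ {v | ∃ i, v ∈ H i}, (∃ j, w j = v) ∨
      ((¬∃ j, w j = v) ∧ v ∈ {v | ∃ i, v ∈ (H i).erase (w i)}) := by
    rintro v ⟨i, hi⟩
    by_cases hv : ∃ j, w j = v
    · exact .inl hv
    · exact .inr ⟨hv, i, mem_erase.2 ⟨fun h => hv ⟨i, h.symm⟩, hi⟩⟩
  intro u hu v hv huv
  rcases split u hu with ⟨i, rfl⟩ | ⟨hu', hue⟩ <;> rcases split v hv with ⟨j, rfl⟩ | ⟨hv', hve⟩
  · rw [hwinj.extend_apply, hwinj.extend_apply] at huv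
    rw [hx huv]
  · rw [hwinj.extend_apply, extend_apply' _ _ _ hv'] at huv
    exact absurd huv (hxe i v)
  · rw [hwinj.extend_apply, extend_apply' _ _ _ hu'] at huv
    exact absurd huv.symm (hxe j u)
  · rw [extend_apply' _ _ _ hu', extend_apply' _ _ _ hv'] at huv
    exact he hue hve huv

theorem exists_monochromatic_selfish_of_reservoir {B α κ : Type*} [Fintype ι] [Fintype κ]
    [DecidableEq κ] [DecidableEq B] [DecidableEq α]
    (hw : ∀ i, w i ∈ H i) (hdeg : ∀ i j, w i ∈ H j → j = i)
    {emb : B → α} (hemb : Injective emb) {R : Finset α} (hR : ∀ b, emb b ∉ R)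
    (hRcard : Fintype.card κ * (Fintype.card ι - 1) < #R)
    (hG : ∀ χ : Finset B → κ, ∃ c, ∃ f : V → B,
      Set.InjOn f {v | ∃ i, v ∈ (H i).erase (w i)} ∧ ∀ i, χ (((H i).erase (w i)).image f) = c)
    (χ : Finset α → κ) :
    ∃ c, ∃ g : V → α, Set.InjOn g {v | ∃ i, v ∈ H i} ∧ ∀ i, χ ((H i).image g) = c := by
  choose χ' hχ' using fun S : Finset B =>
    R.exists_le_card_filter_eq_of_mul_pred_lt (fun y => χ (insert y (S.image emb))) hRcard
  obtain ⟨c, f, hf, hcol⟩ := hG χ'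
  obtain ⟨x, hx, hxR⟩ := exists_injective_forall_mem_of_card_le
    (fun i => {y ∈ R | χ (insert y ((((H i).erase (w i)).image f).image emb)) = c})
    fun i => hcol i ▸ hχ' _
  refine ⟨c, extend w x (emb ∘ f), injOn_extend_of_selfish hw hdeg hx (hemb.comp_injOn hf)
    fun i v h => hR (f v) (h ▸ (mem_filter.1 (hxR i)).1 :), fun i => ?_⟩
  rw [image_extend_of_selfish hw hdeg, ← image_image]
  exact (mem_filter.1 (hxR i)).2

end SelfishExtension

theorem selfish_ramsey_step_general (r m N m₀ : ℕ)
    (H : Fin m → Finset (Fin N))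
    (w : Fin m → Fin N) (hw : ∀ i, w i ∈ H i)
    (hdeg : ∀ i j, w i ∈ H j → j = i)
    (hG : ∀ χ : Finset (Fin m₀) → Fin r, ∃ c : Fin r, ∃ f : Fin N → Fin m₀,
      Set.InjOn f {v | ∃ i, v ∈ (H i).erase (w i)} ∧
      ∀ i, χ (((H i).erase (w i)).image f) = c) :
    ∀ χ : Finset (Fin (m₀ + r * (m - 1) + 1)) → Fin r, ∃ c : Fin r,
      ∃ f : Fin N → Fin (m₀ + r * (m - 1) + 1),
      Set.InjOn f {v | ∃ i, v ∈ H i} ∧ ∀ i, χ ((H i).image f) = c := by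
  have hle : m₀ ≤ m₀ + r * (m - 1) + 1 := by omega
  refine exists_monochromatic_selfish_of_reservoir hw hdeg (Fin.castLE_injective hle)
    (R := Ici ⟨m₀, by omega⟩) (fun b => ?_) ?_ hG
  · simp [Fin.le_def]
  · simp only [Fin.card_Ici, Fintype.card_fin]
    omega

/-- **Lemma (selfish extension).**
`H` is a `k`-uniform hypergraph with (distinct) edges `H 0, …, H (m-1)` on the vertex
type `Fin N`.  It is selfish, witnessed by `w`: each edge `H i` contains the vertex
`w i` of degree one (belonging to no other edge).  The `(k-1)`-uniform hypergraph
`G = G_H` has edges `(H i).erase (w i)`, obtained from `H` by removing one vertex of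
degree one from each edge; note `|E(G)| = |E(H)| = m`.
If every `r`-coloring of the `(k-1)`-element subsets of an `m₀`-element set yields a
monochromatic copy of `G`, then every `r`-coloring of the `k`-element subsets of an
`(m₀ + r(m-1) + 1)`-element set yields a monochromatic copy of `H`; in particular
`R(H; r) ≤ R(G; r) + r(|E(H)| - 1) + 1`. -/
theorem selfish_ramsey_step (k r m N m₀ : ℕ) (hk : 3 ≤ k) (hr : 2 ≤ r)
    (H : Fin m → Finset (Fin N))
    (hedges : Function.Injective H)
    (hcard : ∀ i, (H i).card = k)
    (w : Fin m → Fin N) (hw : ∀ i, w i ∈ H i)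
    (hdeg : ∀ i j, w i ∈ H j → j = i)
    (hG : ∀ χ : Finset (Fin m₀) → Fin r, ∃ c : Fin r, ∃ f : Fin N → Fin m₀,
      Set.InjOn f {v | ∃ i, v ∈ (H i).erase (w i)} ∧
      ∀ i, χ (((H i).erase (w i)).image f) = c) :
    ∀ χ : Finset (Fin (m₀ + r * (m - 1) + 1)) → Fin r, ∃ c : Fin r,
      ∃ f : Fin N → Fin (m₀ + r * (m - 1) + 1),
      Set.InjOn f {v | ∃ i, v ∈ H i} ∧ ∀ i, χ ((H i).image f) = c :=
  selfish_ramsey_step_general r m N m₀ H w hw hdeg hG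
end

section
/- For all integers k ≥ 2, ℓ ≥ 3, r ≥ 2, and n ≥ 2^{r+1}ℓ + (k−2)ℓr, every coloring of the k-element subsets of an n-element set with r colors yields a monochromatic copy of the k-uniform loose path P_ℓ^(k) of length ℓ. -/
/-!
Set aside `r ℓ` disjoint blocks `B_j` of `k - 2` vertices and two disjoint sets `X`, `Y` of
`(2 ^ r - 1) ℓ` further vertices. The colours of the hyperedges `{x, y} ∪ B_j` turn the vertices
outside the blocks into an `r`-edge-coloured multigraph with one layer per block, and a
monochromatic path of length `ℓ` whose steps lie in distinct layers is a monochromatic loose path.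

Such a path is found by induction on a set `L` of colours for which every pair in `X × Y` has
at least `|L| ℓ` layers coloured from `L`. Pick `γ ∈ L` and join two vertices when at least `ℓ`
of their layers have colour `γ`; a path of length `ℓ` in this graph lifts to distinct layers,
as each of its steps has `ℓ` candidates. A depth-first search in `X ∪ Y` either finds such a path or finds `A ⊆ X`, `B ⊆ Y` of
size `(2 ^ (|L| - 1) - 1) ℓ` with fewer than `ℓ` layers of colour `γ` between any `a ∈ A` and
`b ∈ B`, so that `L \ {γ}` works for `(A, B)`. For `|L| = 1` the graph is complete between `X`
and `Y`.
-/

open Finset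

namespace SimpleGraph

variable {α : Type*} (G : SimpleGraph α)

def HasPathIn (S : Finset α) (ℓ : ℕ) : Prop :=
  ∃ p : List α, p.length = ℓ + 1 ∧ p.Nodup ∧ p.IsChain G.Adj ∧ ∀ v ∈ p, v ∈ S

variable [DecidableEq α]

/-- A state of a depth-first search inside `S`: `F` is the set of finished vertices and `p` the
stack, top first. The search is stopped as soon as `P F` holds. -/
structure IsDFSState (S : Finset α) (ℓ : ℕ) (P : Finset α → Prop) (F : Finset α)
    (p : List α) : Prop where
  subset : F ⊆ S
  stack_mem : ∀ v ∈ p, v ∈ S \ F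
  nodup : p.Nodup
  isChain : p.IsChain G.Adj
  length_le : p.length ≤ ℓ + 1
  not_P : ¬P F
  not_adj : ∀ v ∈ F, ∀ w ∈ S \ F, w ∉ p → ¬G.Adj v w

namespace IsDFSState

variable {G} {S : Finset α} {ℓ : ℕ} {P : Finset α → Prop} {F : Finset α} {p : List α}

theorem length_le_card (h : G.IsDFSState S ℓ P F p) : p.length ≤ #(S \ F) := by
  rw [← List.toFinset_card_of_nodup h.nodup]
  exact card_le_card fun v hv => h.stack_mem v (List.mem_toFinset.1 hv)

theorem push (h : G.IsDFSState S ℓ P F p) {w : α} (hw : w ∈ S \ F) (hwp : w ∉ p)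
    (hadj : ∀ x ∈ p.head?, G.Adj x w) (hlen : p.length ≠ ℓ + 1) :
    G.IsDFSState S ℓ P F (w :: p) where
  subset := h.subset
  stack_mem := by simpa [← mem_sdiff] using ⟨hw, h.stack_mem⟩
  nodup := List.nodup_cons.2 ⟨hwp, h.nodup⟩
  isChain := List.isChain_cons.2 ⟨fun x hx => (hadj x hx).symm, h.isChain⟩
  length_le := by simpa using Nat.lt_of_le_of_ne h.length_le hlen
  not_P := h.not_P
  not_adj v hv u hu hup := h.not_adj v hv u hu (by simp_all)

theorem not_adj_insert {x : α} {q : List α} (h : G.IsDFSState S ℓ P F (x :: q))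
    (hx : ∀ w ∈ S \ F, w ∉ x :: q → ¬G.Adj x w) :
    ∀ v ∈ insert x F, ∀ w ∈ S \ insert x F, w ∉ q → ¬G.Adj v w := by
  intro v hv w hw hwq
  have hw' : w ∈ S \ F := by simp_all
  have hwxq : w ∉ x :: q := by simp_all
  rcases mem_insert.1 hv with rfl | hvF
  · exact hx w hw' hwxq
  · exact h.not_adj v hvF w hw' hwxq

theorem pop {x : α} {q : List α} (h : G.IsDFSState S ℓ P F (x :: q))
    (hx : ∀ w ∈ S \ F, w ∉ x :: q → ¬G.Adj x w) (hP : ¬P (insert x F)) :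
    G.IsDFSState S ℓ P (insert x F) q where
  subset := insert_subset (mem_sdiff.1 (h.stack_mem x List.mem_cons_self)).1 h.subset
  stack_mem v hv := by
    have := h.stack_mem v (List.mem_cons_of_mem x hv)
    have hvx : v ≠ x := fun hvx => (List.nodup_cons.1 h.nodup).1 (hvx ▸ hv)
    simp_all
  nodup := (List.nodup_cons.1 h.nodup).2
  isChain := h.isChain.tail
  length_le := by have := h.length_le; simp only [List.length_cons] at this; omega
  not_P := hP
  not_adj := h.not_adj_insert hx

theorem hasPathIn_or_exists_cut (hS : P S) (F : Finset α) (p : List α)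
    (h : G.IsDFSState S ℓ P F p) :
    G.HasPathIn S ℓ ∨ ∃ F : Finset α, ∃ x : α, ∃ R : Finset α, #R ≤ ℓ ∧ ¬P F ∧
      P (insert x F) ∧ ∀ v ∈ insert x F, ∀ w ∈ S \ insert x F, w ∉ R → ¬G.Adj v w := by
  by_cases hlen : p.length = ℓ + 1
  · exact .inl ⟨p, hlen, h.nodup, h.isChain, fun v hv => (mem_sdiff.1 (h.stack_mem v hv)).1⟩
  by_cases hext : ∃ w ∈ S \ F, w ∉ p ∧ ∀ x ∈ p.head?, G.Adj x w
  · obtain ⟨w, hw, hwp, hadj⟩ := hext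
    exact hasPathIn_or_exists_cut hS F (w :: p) (h.push hw hwp hadj hlen)
  push Not at hext
  cases p with
  | nil =>
    have hFS : F = S := h.subset.antisymm fun v hv => by
      by_contra hvF
      obtain ⟨y, hy, -⟩ := hext v (mem_sdiff.2 ⟨hv, hvF⟩) List.not_mem_nil
      simp at hy
    exact absurd (hFS ▸ hS) h.not_P
  | cons x q =>
    have hx : ∀ w ∈ S \ F, w ∉ x :: q → ¬G.Adj x w := fun w hw hwp => by
      simpa using hext w hw hwp
    by_cases hP : P (insert x F)
    · refine .inr ⟨F, x, q.toFinset, ?_, h.not_P, hP,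
        fun v hv w hw hwq => h.not_adj_insert hx v hv w hw (by simpa using hwq)⟩
      have := h.length_le
      simp only [List.length_cons] at this hlen
      have := List.toFinset_card_le q
      omega
    · exact hasPathIn_or_exists_cut hS (insert x F) q (h.pop hx hP)
termination_by 2 * #(S \ F) - p.length
decreasing_by
  · have := (h.push hw hwp hadj hlen).length_le_card
    simp only [List.length_cons] at this ⊢
    omega
  · subst_vars
    have := h.length_le_card
    have : #(S \ insert x F) + 1 = #(S \ F) := by
      rw [sdiff_insert, card_erase_add_one (h.stack_mem x List.mem_cons_self)]
    simp only [List.length_cons] at *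
    omega

end IsDFSState

theorem hasPathIn_or_exists_cut (S : Finset α) (ℓ : ℕ) (P : Finset α → Prop) (h0 : ¬P ∅)
    (hS : P S) :
    G.HasPathIn S ℓ ∨ ∃ F : Finset α, ∃ x : α, ∃ R : Finset α, #R ≤ ℓ ∧ ¬P F ∧
      P (insert x F) ∧ ∀ v ∈ insert x F, ∀ w ∈ S \ insert x F, w ∉ R → ¬G.Adj v w :=
  IsDFSState.hasPathIn_or_exists_cut hS ∅ []
    { subset := empty_subset S
      stack_mem := by simp
      nodup := List.nodup_nil
      isChain := List.isChain_nil
      length_le := by simp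
      not_P := h0
      not_adj := by simp }

theorem hasPathIn_or_exists_anticomplete {X Y : Finset α} {s ℓ : ℕ} (hs : 0 < s)
    (hX : 2 * s + ℓ ≤ #X) (hY : 2 * s + ℓ ≤ #Y) :
    G.HasPathIn (X ∪ Y) ℓ ∨
      ∃ A ⊆ X, ∃ B ⊆ Y, s ≤ #A ∧ s ≤ #B ∧ ∀ a ∈ A, ∀ b ∈ B, ¬G.Adj a b := by
  obtain hpath | ⟨F, x, R, hR, hF, hxF, hcut⟩ := G.hasPathIn_or_exists_cut (X ∪ Y) ℓ
    (fun F => s ≤ #(F ∩ X) ∨ s ≤ #(F ∩ Y)) (by simpa using hs.ne') (.inl (by rw [union_inter_cancel_left]; omega))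
  · exact .inl hpath
  right
  simp only [not_or, not_le] at hF
  have hle : ∀ Z, #(F ∩ Z) < s → #(insert x F ∩ Z) ≤ s := fun Z hZ =>
    calc #(insert x F ∩ Z) ≤ #(insert x (F ∩ Z)) := card_le_card fun v => by simp only [mem_inter, mem_insert]; tauto
      _ ≤ s := (card_insert_le _ _).trans hZ
  have hrest : ∀ Z, #(insert x F ∩ Z) ≤ s → 2 * s + ℓ ≤ #Z →
      s ≤ #(Z \ (insert x F ∪ R)) := by
    intro Z hZ hZs
    have h1 := card_le_card_sdiff_add_card (s := Z) (t := insert x F ∩ Z ∪ R)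
    have h2 := card_union_le (insert x F ∩ Z) R
    rw [show Z \ (insert x F ∩ Z ∪ R) = Z \ (insert x F ∪ R) by ext; simp only [mem_sdiff, mem_union, mem_inter, mem_insert]; tauto] at h1
    omega
  have hcut' : ∀ v ∈ insert x F, ∀ Z ⊆ X ∪ Y, ∀ w ∈ Z \ (insert x F ∪ R), ¬G.Adj v w :=
    fun v hv Z hZ w hw => by
      simp only [mem_sdiff, mem_union, not_or] at hw
      exact hcut v hv w (mem_sdiff.2 ⟨hZ hw.1, hw.2.1⟩) hw.2.2
  rcases hxF with hsX | hsY
  · exact ⟨insert x F ∩ X, inter_subset_right, Y \ (insert x F ∪ R), sdiff_subset, hsX,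
      hrest Y (hle Y hF.2) hY,
      fun a ha b hb => hcut' a (mem_inter.1 ha).1 Y subset_union_right b hb⟩
  · exact ⟨X \ (insert x F ∪ R), sdiff_subset, insert x F ∩ Y, inter_subset_right,
      hrest X (hle X hF.1) hX, hsY,
      fun a ha b hb hab => hcut' b (mem_inter.1 hb).1 X subset_union_left a ha hab.symm⟩

theorem exists_path_of_forall_adj (ℓ : ℕ) {X Y : Finset α} (hXY : Disjoint X Y)
    (hadj : ∀ x ∈ X, ∀ y ∈ Y, G.Adj x y) (hX : ℓ / 2 < #X) (hY : (ℓ + 1) / 2 ≤ #Y) :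
    ∃ p : List α, p.length = ℓ + 1 ∧ p.Nodup ∧ p.IsChain G.Adj ∧ (∀ v ∈ p, v ∈ X ∪ Y) ∧
      ∀ v ∈ p.head?, v ∈ X := by
  induction ℓ generalizing X Y with
  | zero =>
    obtain ⟨x, hx⟩ := card_pos.1 hX
    exact ⟨[x], rfl, List.nodup_singleton x, List.isChain_singleton x, by simp [hx], by simp [hx]⟩
  | succ ℓ ih =>
    obtain ⟨x, hx⟩ := card_pos.1 (Nat.zero_lt_of_lt hX)
    have hxY : x ∉ Y := Finset.disjoint_left.1 hXY hx
    obtain ⟨p, hlen, hnd, hch, hpXY, hhead⟩ := ih (X := Y) (Y := X.erase x)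
      (disjoint_of_subset_right (erase_subset x X) hXY.symm)
      (fun y hy x' hx' => (hadj x' (mem_of_mem_erase hx') y hy).symm)
      (by omega) (by rw [card_erase_of_mem hx]; omega)
    refine ⟨x :: p, by simp [hlen], List.nodup_cons.2 ⟨fun hxp => ?_, hnd⟩,
      List.isChain_cons.2 ⟨fun y hy => hadj x hx y (hhead y hy), hch⟩, fun v hv => ?_,
      by simp [hx]⟩
    · rcases mem_union.1 (hpXY x hxp) with h | h
      · exact hxY h
      · exact notMem_erase x X h
    · rcases List.mem_cons.1 hv with rfl | hv
      · exact mem_union_left _ hx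
      · rcases mem_union.1 (hpXY v hv) with h | h
        · exact mem_union_right _ h
        · exact mem_union_left _ (mem_of_mem_erase h)

theorem hasPathIn_of_forall_adj {X Y : Finset α} (hXY : Disjoint X Y)
    (hadj : ∀ x ∈ X, ∀ y ∈ Y, G.Adj x y) {ℓ : ℕ} (hℓ : 0 < ℓ) (hX : ℓ ≤ #X) (hY : ℓ ≤ #Y) :
    G.HasPathIn (X ∪ Y) ℓ :=
  let ⟨p, hlen, hnd, hch, hp, _⟩ := G.exists_path_of_forall_adj ℓ hXY hadj (by omega) (by omega)
  ⟨p, hlen, hnd, hch, hp⟩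

end SimpleGraph

theorem exists_injOn_forall_mem {ι : Type*} [Nonempty ι] [DecidableEq ι] (A : ℕ → Finset ι)
    {m : ℕ} (hA : ∀ i < m, m ≤ #(A i)) :
    ∃ f : ℕ → ι, Set.InjOn f (Set.Iio m) ∧ ∀ i < m, f i ∈ A i := by
  obtain ⟨g, hg, hgA⟩ := (all_card_le_biUnion_card_iff_exists_injective fun i : Fin m => A i).1
    fun s => by
      obtain rfl | ⟨i, hi⟩ := s.eq_empty_or_nonempty
      · simp
      · calc #s ≤ m := (card_le_univ s).trans (by simp)
          _ ≤ #(A i) := hA i i.2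
          _ ≤ #(s.biUnion fun i => A i) :=
            card_le_card (subset_biUnion_of_mem (fun i : Fin m => A i) hi)
  refine ⟨fun i => if h : i < m then g ⟨i, h⟩ else Classical.arbitrary ι, ?_, fun i hi => ?_⟩
  · intro i hi i' hi' he
    simp only [Set.mem_Iio] at hi hi'
    simp only [dif_pos hi, dif_pos hi'] at he
    exact congrArg Fin.val (hg he)
  · simpa only [dif_pos hi] using hgA ⟨i, hi⟩

section Layers

variable {α ι κ : Type*}

/-- `Q x y j` is the colour of the `j`-th of the parallel edges joining `x` and `y`; the steps of
the path must use pairwise distinct layers `j`. -/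
def HasMonoPathInDistinctLayers (Q : α → α → ι → κ) (ℓ : ℕ) : Prop :=
  ∃ γ : κ, ∃ u : ℕ → α, ∃ js : ℕ → ι, Set.InjOn u (Set.Iio (ℓ + 1)) ∧
    Set.InjOn js (Set.Iio ℓ) ∧ ∀ i < ℓ, Q (u i) (u (i + 1)) (js i) = γ

variable [Fintype ι] [DecidableEq ι] [DecidableEq κ]

def colorGraph (Q : α → α → ι → κ) (γ : κ) (ℓ : ℕ) : SimpleGraph α :=
  SimpleGraph.fromRel fun x y => ℓ ≤ #{j | Q x y j = γ}

theorem card_filter_mem_cons (f : ι → κ) {γ : κ} {L : Finset κ} (hγ : γ ∉ L) :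
    #{j | f j ∈ cons γ L hγ} = #{j | f j = γ} + #{j | f j ∈ L} := by
  rw [← card_union_of_disjoint (disjoint_filter.2 fun j _ (h : f j = γ) h' => hγ (h ▸ h'))]
  congr 1
  ext j
  simp

variable {Q : α → α → ι → κ}

theorem hasMonoPathInDistinctLayers_of_hasPathIn (hQ : ∀ x y j, Q x y j = Q y x j) {γ : κ}
    {ℓ : ℕ} (hℓ : 0 < ℓ) {S : Finset α} (h : (colorGraph Q γ ℓ).HasPathIn S ℓ) :
    HasMonoPathInDistinctLayers Q ℓ := by
  obtain ⟨p, hlen, hnd, hch, -⟩ := h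
  have hch' : p.IsChain fun x y => ℓ ≤ #{j | Q x y j = γ} := hch.imp fun x y hxy => by
    obtain ⟨-, hxy | hyx⟩ := (SimpleGraph.fromRel_adj _ x y).1 hxy
    · exact hxy
    · simpa only [hQ y x] using hyx
  obtain ⟨a, -⟩ := List.exists_mem_of_length_pos (by omega : 0 < p.length)
  set u : ℕ → α := fun i => p.getD i a
  have hu : ∀ i (hi : i < p.length), u i = p[i] := fun i hi => List.getD_eq_getElem _ _ hi
  have hcount : ∀ i < ℓ, ℓ ≤ #{j | Q (u i) (u (i + 1)) j = γ} := fun i hi => by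
    rw [hu i (by omega), hu (i + 1) (by omega)]
    exact hch'.getElem i (by omega)
  have : Nonempty ι := by
    obtain ⟨j, -⟩ := card_pos.1 (hℓ.trans_le (hcount 0 hℓ))
    exact ⟨j⟩
  obtain ⟨js, hjs, hjsQ⟩ := exists_injOn_forall_mem _ hcount
  refine ⟨γ, u, js, fun i hi i' hi' he => ?_, hjs, fun i hi => (mem_filter.1 (hjsQ i hi)).2⟩
  simp only [Set.mem_Iio] at hi hi'
  rw [hu i (by omega), hu i' (by omega)] at he
  exact hnd.getElem_inj_iff.1 he

theorem hasMonoPathInDistinctLayers_of_le_card [DecidableEq α]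
    (hQ : ∀ x y j, Q x y j = Q y x j) {ℓ : ℕ} (hℓ : 0 < ℓ) {L : Finset κ} (hL : L.Nonempty)
    {X Y : Finset α} (hXY : Disjoint X Y) (hX : (2 ^ #L - 1) * ℓ ≤ #X)
    (hY : (2 ^ #L - 1) * ℓ ≤ #Y) (hcount : ∀ x ∈ X, ∀ y ∈ Y, #L * ℓ ≤ #{j | Q x y j ∈ L}) :
    HasMonoPathInDistinctLayers Q ℓ := by
  induction hL using Finset.Nonempty.cons_induction generalizing X Y with
  | singleton γ =>
    simp only [card_singleton, pow_one, Nat.add_one_sub_one, one_mul, mem_singleton]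
      at hX hY hcount
    refine hasMonoPathInDistinctLayers_of_hasPathIn hQ (γ := γ) hℓ
      (SimpleGraph.hasPathIn_of_forall_adj _ hXY (fun x hx y hy => ?_) hℓ hX hY)
    exact (SimpleGraph.fromRel_adj _ x y).2
      ⟨fun hxy => Finset.disjoint_left.1 hXY hx (hxy ▸ hy), .inl (hcount x hx y hy)⟩
  | cons γ L hγ hL ih =>
    have hL2 : 2 ≤ 2 ^ #L := Nat.le_self_pow (card_ne_zero.2 hL) 2
    have hsize : 2 * ((2 ^ #L - 1) * ℓ) + ℓ = (2 ^ #(cons γ L hγ) - 1) * ℓ := by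
      rw [card_cons, pow_succ]
      zify [hL2.trans' one_le_two, (by omega : 1 ≤ 2 ^ #L * 2)]
      ring
    rcases (colorGraph Q γ ℓ).hasPathIn_or_exists_anticomplete (Nat.mul_pos (by omega) hℓ)
      (hsize ▸ hX) (hsize ▸ hY) with hpath | ⟨A, hA, B, hB, hsA, hsB, hAB⟩
    · exact hasMonoPathInDistinctLayers_of_hasPathIn hQ hℓ hpath
    refine ih (hXY.mono hA hB) hsA hsB fun a ha b hb => ?_
    have hab : a ≠ b := fun hab => Finset.disjoint_left.1 hXY (hA ha) (hab ▸ hB hb)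
    have hγab : #{j | Q a b j = γ} < ℓ := by
      by_contra! h
      exact hAB a ha b hb ((SimpleGraph.fromRel_adj _ a b).2 ⟨hab, .inl h⟩)
    have := hcount a (hA ha) b (hB hb)
    rw [card_filter_mem_cons _ hγ, card_cons, add_one_mul] at this
    omega

end Layers

theorem HasMonoLoosePath.of_map {α β : Type} [DecidableEq α] [DecidableEq β] {r k ℓ : ℕ}
    (φ : β ↪ α) {χ : Finset α → Fin r} (h : HasMonoLoosePath k ℓ fun s => χ (s.map φ)) :
    HasMonoLoosePath k ℓ χ := by
  obtain ⟨c, f, hf, hc⟩ := h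
  refine ⟨c, φ ∘ f, φ.injective.comp_injOn hf, fun i hi => ?_⟩
  rw [← image_image, ← map_eq_image]
  exact hc i hi

section LoosePathVertex

variable {ι β : Type} (k : ℕ) (u : ℕ → β) (js : ℕ → ι)

/-- The `m`-th vertex of the loose path of `(k + 2)`-sets through `u 0, …, u ℓ` whose `i`-th edge
is completed by the block `js i`: writing `m = i (k + 1) + q`, it is `u i` if `q = 0` and the
`(q - 1)`-th vertex of block `js i` otherwise. -/
def loosePathVertex (m : ℕ) : (ι × Fin k) ⊕ β :=
  if h : m % (k + 1) = 0 then .inr (u (m / (k + 1)))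
  else .inl (js (m / (k + 1)), ⟨m % (k + 1) - 1, by have := Nat.mod_lt m k.add_one_pos; omega⟩)

theorem loosePathVertex_mul (i : ℕ) : loosePathVertex k u js (i * (k + 1)) = .inr (u i) := by
  simp [loosePathVertex]

theorem loosePathVertex_mul_add_succ (i : ℕ) (q : Fin k) :
    loosePathVertex k u js (i * (k + 1) + (q + 1)) = .inl (js i, q) := by
  have hq : (q : ℕ) + 1 < k + 1 := by omega
  have hdiv : (i * (k + 1) + (q + 1)) / (k + 1) = i := by
    rw [Nat.add_comm, Nat.add_mul_div_right _ _ k.add_one_pos, Nat.div_eq_of_lt hq, zero_add]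
  simp [loosePathVertex, hdiv, Nat.mul_add_mod_of_lt hq]

theorem loosePathVertex_injOn {ℓ : ℕ} (hu : Set.InjOn u (Set.Iio (ℓ + 1)))
    (hjs : Set.InjOn js (Set.Iio ℓ)) :
    Set.InjOn (loosePathVertex k u js) (Set.Iio ((k + 1) * ℓ + 1)) := by
  have hk : 0 < k + 1 := k.add_one_pos
  have hdiv : ∀ m < (k + 1) * ℓ + 1,
      m / (k + 1) < ℓ + 1 ∧ (m % (k + 1) ≠ 0 → m / (k + 1) < ℓ) := fun m hm => by
    refine ⟨(Nat.div_lt_iff_lt_mul hk).2 (by rw [add_one_mul, Nat.mul_comm ℓ]; omega),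
      fun hmod => (Nat.div_lt_iff_lt_mul hk).2 (lt_of_le_of_ne (by rw [Nat.mul_comm ℓ]; omega) ?_)⟩
    rintro rfl
    exact hmod (Nat.mul_mod_left ℓ (k + 1))
  intro m hm m' hm' he
  obtain ⟨hm₁, hm₂⟩ := hdiv m hm
  obtain ⟨hm'₁, hm'₂⟩ := hdiv m' hm'
  suffices m / (k + 1) = m' / (k + 1) ∧ m % (k + 1) = m' % (k + 1) by
    rw [← Nat.div_add_mod m (k + 1), ← Nat.div_add_mod m' (k + 1), this.1, this.2]
  unfold loosePathVertex at he
  split_ifs at he with h h' <;>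
    simp only [Sum.inr.injEq, Sum.inl.injEq, Prod.mk.injEq, Fin.mk.injEq] at he
  · exact ⟨hu hm₁ hm'₁ he, by rw [h, h']⟩
  · exact ⟨hjs (hm₂ h) (hm'₂ ‹_›) he.1, by omega⟩

variable [DecidableEq ι] [DecidableEq β]

def loosePathEdge (x y : β) (j : ι) : Finset ((ι × Fin k) ⊕ β) :=
  insert (.inr x) (insert (.inr y) (univ.image fun q => .inl (j, q)))

theorem image_loosePathVertex_Ico (i : ℕ) :
    (Ico (i * (k + 1)) (i * (k + 1) + (k + 2))).image (loosePathVertex k u js) =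
      loosePathEdge k (u i) (u (i + 1)) (js i) := by
  ext z
  simp only [mem_image, mem_Ico, loosePathEdge, mem_insert, mem_univ, true_and]
  constructor
  · rintro ⟨m, ⟨hm₁, hm₂⟩, rfl⟩
    obtain ⟨q, rfl⟩ := Nat.exists_eq_add_of_le hm₁
    rcases q with _ | q
    · exact .inl (loosePathVertex_mul k u js i)
    by_cases hq : q < k
    · exact .inr (.inr ⟨⟨q, hq⟩, (loosePathVertex_mul_add_succ k u js i ⟨q, hq⟩).symm⟩)
    · obtain rfl : k = q := by omega
      rw [← add_one_mul]
      exact .inr (.inl (loosePathVertex_mul k u js (i + 1)))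
  · rintro (rfl | rfl | ⟨q, rfl⟩)
    · exact ⟨i * (k + 1), ⟨le_rfl, by omega⟩, loosePathVertex_mul k u js i⟩
    · refine ⟨(i + 1) * (k + 1), ⟨?_, ?_⟩, loosePathVertex_mul k u js (i + 1)⟩ <;>
        rw [add_one_mul] <;> omega
    · exact ⟨i * (k + 1) + (q + 1), ⟨by omega, by omega⟩,
        loosePathVertex_mul_add_succ k u js i q⟩

theorem hasMonoLoosePath_of_hasMonoPathInDistinctLayers {r ℓ : ℕ}
    (χ : Finset ((ι × Fin k) ⊕ β) → Fin r)
    (h : HasMonoPathInDistinctLayers (fun x y j => χ (loosePathEdge k x y j)) ℓ) :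
    HasMonoLoosePath (k + 2) ℓ χ := by
  obtain ⟨c, u, js, hu, hjs, hc⟩ := h
  refine ⟨c, loosePathVertex k u js, loosePathVertex_injOn k u js hu hjs, fun i hi => ?_⟩
  rw [show k + 2 - 1 = k + 1 from rfl, image_loosePathVertex_Ico]
  exact hc i hi

end LoosePathVertex

theorem loosePath_constructive_bound_general (k ℓ r : ℕ) (hk : 2 ≤ k) (hl : 3 ≤ ℓ)
    (n : ℕ) (hn : 2 ^ (r + 1) * ℓ + (k - 2) * ℓ * r ≤ n) (χ : Finset (Fin n) → Fin r) :
    HasMonoLoosePath k ℓ χ := by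
  obtain ⟨k, rfl⟩ := Nat.exists_eq_add_of_le' hk
  have : Nonempty (Fin r) := ⟨χ ∅⟩
  set m := (2 ^ r - 1) * ℓ
  obtain ⟨φ⟩ : Nonempty ((Fin (r * ℓ) × Fin k) ⊕ (Fin m ⊕ Fin m) ↪ Fin n) := by
    refine Function.Embedding.nonempty_of_card_le ?_
    simp only [Fintype.card_sum, Fintype.card_prod, Fintype.card_fin]
    have hm : m ≤ 2 ^ r * ℓ := Nat.mul_le_mul_right ℓ (Nat.sub_le _ 1)
    have : 2 ^ (r + 1) * ℓ + (k + 2 - 2) * ℓ * r = 2 ^ r * ℓ + 2 ^ r * ℓ + r * ℓ * k := by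
      rw [Nat.add_sub_cancel]; ring
    omega
  refine HasMonoLoosePath.of_map φ (hasMonoLoosePath_of_hasMonoPathInDistinctLayers k _ ?_)
  refine hasMonoPathInDistinctLayers_of_le_card (L := univ) (X := univ.map .inl)
    (Y := univ.map .inr) (fun x y j => by simp only [loosePathEdge, insert_comm]) (by omega)
    univ_nonempty (disjoint_map_inl_map_inr _ _) (by simp [m]) (by simp [m]) ?_
  intro x _ y _
  simp

theorem loosePath_constructive_bound (k ℓ r : ℕ) (hk : 2 ≤ k) (hl : 3 ≤ ℓ) (hr : 2 ≤ r)
    (n : ℕ) (hn : 2 ^ (r + 1) * ℓ + (k - 2) * ℓ * r ≤ n) (χ : Finset (Fin n) → Fin r) :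
    HasMonoLoosePath k ℓ χ :=
  loosePath_constructive_bound_general k ℓ r hk hl n hn χ
end

section
/- For all integers k ≥ 2 and ℓ ≥ 3, and every integer n ≥ (2k−2)ℓ + k, every coloring of the k-element subsets of an n-element set with 2 colors yields a monochromatic copy of the k-uniform loose path P_ℓ^(k) of length ℓ. -/
/-!
Write `q = k - 1`. A depth-first search keeps a red (colour `0`) loose path and a set `T` of
discarded vertices, each of which spans a blue (colour `1`) edge with every `q` unexplored
vertices. If a vertex of the last edge other than its first spans a red edge with `q` unexplored
vertices, the path is extended by that edge; otherwise the last edge is removed and its `q` new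
vertices are discarded into `T` (when the path is a single vertex, that vertex is discarded and
the search restarts at an unexplored vertex). Each step increases `q · (length) + 2 |T| < 2n`, so
the search stops with a red path of length `ℓ` or with `|T| ≥ ⌈ℓ/2⌉`. In the second case at most
`q (ℓ - 1) + 1 + |T|` vertices are explored, and since `n ≥ 2qℓ + q + 1` the unexplored vertices
together with `T` carry a blue loose path of length `ℓ`.
-/

open Finset

variable {α : Type*} [DecidableEq α] {r : ℕ}

-- `q = k - 1`: edge `i` is the image of `[i q, i q + q]`.
structure IsMonoLoosePath (χ : Finset α → Fin r) (c : Fin r) (q a : ℕ) (f : ℕ → α) : Prop where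
  injOn : Set.InjOn f (Set.Iio (q * a + 1))
  color_edge : ∀ i < a, χ ((Ico (i * q) (i * q + (q + 1))).image f) = c

def loosePathVerts (f : ℕ → α) (q a : ℕ) : Finset α := (range (q * a + 1)).image f

-- The vertices of the last edge other than its first one; for `a = 0`, truncated subtraction
-- makes this `{0}`, the path's only vertex.
def lastBlock (q a : ℕ) : Finset ℕ := Ico (q * a + 1 - q) (q * a + 1)

lemma self_mem_lastBlock {q : ℕ} (hq : 0 < q) (a : ℕ) : q * a ∈ lastBlock q a := by
  simp only [lastBlock, mem_Ico]; omega

lemma mem_lastBlock {q a p : ℕ} : p ∈ lastBlock q a ↔ q * a < p + q ∧ p ≤ q * a := by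
  simp only [lastBlock, mem_Ico]; omega

lemma lastBlock_succ (q a : ℕ) : lastBlock q (a + 1) = Ico (q * a + 1) (q * a + 1 + q) := by
  simp only [lastBlock, Nat.mul_succ]; congr 1 <;> omega

lemma loosePathVerts_zero (f : ℕ → α) (q : ℕ) : loosePathVerts f q 0 = {f 0} := by
  simp [loosePathVerts]

lemma loosePathVerts_succ (f : ℕ → α) (q a : ℕ) :
    loosePathVerts f q (a + 1) = loosePathVerts f q a ∪ (lastBlock q (a + 1)).image f := by
  rw [loosePathVerts, loosePathVerts, lastBlock_succ, ← image_union, range_eq_Ico, range_eq_Ico,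
    Ico_union_Ico_eq_Ico (Nat.zero_le _) (Nat.le_add_right _ _), Nat.mul_succ]
  congr 2; omega

lemma image_comp_swap_of_mem (f : ℕ → α) {s : Finset ℕ} {p w : ℕ} (hp : p ∈ s) (hw : w ∈ s) :
    s.image (f ∘ Equiv.swap p w) = s.image f := by
  have : s.map (Equiv.swap p w).toEmbedding = s := map_perm fun x hx => by
    rcases (Equiv.swap_apply_ne_self_iff.mp hx).2 with rfl | rfl <;> assumption
  rw [← image_image, ← Equiv.coe_toEmbedding, ← map_eq_image, this]

lemma image_comp_swap_of_notMem (f : ℕ → α) {s : Finset ℕ} {p w : ℕ} (hp : p ∉ s) (hw : w ∉ s) :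
    s.image (f ∘ Equiv.swap p w) = s.image f :=
  image_congr fun _ hx => congrArg f <|
    Equiv.swap_apply_of_ne_of_ne (ne_of_mem_of_not_mem hx hp) (ne_of_mem_of_not_mem hx hw)

lemma loosePathVerts_comp_swap (f : ℕ → α) {q a p : ℕ} (hp : p ∈ lastBlock q a) :
    loosePathVerts (f ∘ Equiv.swap p (q * a)) q a = loosePathVerts f q a := by
  refine image_comp_swap_of_mem f ?_ (by simp)
  simp only [mem_range]
  exact Nat.lt_succ_of_le (mem_lastBlock.mp hp).2

namespace IsMonoLoosePath

variable {χ : Finset α → Fin r} {c : Fin r} {q a : ℕ} {f : ℕ → α}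

lemma card_loosePathVerts (hf : IsMonoLoosePath χ c q a f) :
    (loosePathVerts f q a).card = q * a + 1 := by
  rw [loosePathVerts, card_image_of_injOn (hf.injOn.mono (by simp)), card_range]

lemma of_succ (hf : IsMonoLoosePath χ c q (a + 1) f) : IsMonoLoosePath χ c q a f where
  injOn := hf.injOn.mono fun m hm => by
    simp only [Set.mem_Iio] at hm ⊢; nlinarith
  color_edge i hi := hf.color_edge i (by omega)

lemma card_image_lastBlock_succ (hf : IsMonoLoosePath χ c q (a + 1) f) :
    ((lastBlock q (a + 1)).image f).card = q := by
  rw [card_image_of_injOn, lastBlock_succ, Nat.card_Ico, Nat.add_sub_cancel_left]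
  refine hf.injOn.mono fun m hm => ?_
  simp only [lastBlock_succ, coe_Ico, Set.mem_Ico, Set.mem_Iio] at hm ⊢
  nlinarith

lemma disjoint_image_lastBlock_succ (hf : IsMonoLoosePath χ c q (a + 1) f) :
    Disjoint (loosePathVerts f q a) ((lastBlock q (a + 1)).image f) := by
  simp only [disjoint_left, loosePathVerts, lastBlock_succ, mem_image, mem_range, mem_Ico]
  rintro _ ⟨m, hm, rfl⟩ ⟨m', hm', he⟩
  have : m' = m := hf.injOn (by simp only [Set.mem_Iio]; nlinarith)
    (by simp only [Set.mem_Iio]; nlinarith) he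
  omega

lemma comp_swap (hf : IsMonoLoosePath χ c q a f) {p : ℕ} (hp : p ∈ lastBlock q a) :
    IsMonoLoosePath χ c q a (f ∘ Equiv.swap p (q * a)) := by
  obtain ⟨hp₁, hp₂⟩ := mem_lastBlock.mp hp
  have hswap :
      Set.MapsTo (Equiv.swap p (q * a)) (Set.Iio (q * a + 1)) (Set.Iio (q * a + 1)) := by
    intro m hm
    rcases eq_or_ne m p with rfl | hmp
    · simp
    rcases eq_or_ne m (q * a) with rfl | hmw
    · simpa using hp₂
    · rwa [Equiv.swap_apply_of_ne_of_ne hmp hmw]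
  refine ⟨hf.injOn.comp (Equiv.injective _).injOn hswap, fun i hi => ?_⟩
  rw [← hf.color_edge i hi]
  congr 1
  have : (i + 1) * q ≤ a * q := Nat.mul_le_mul_right q hi
  rcases Nat.lt_or_ge (i + 1) a with hi' | hi'
  · have : (i + 2) * q ≤ a * q := Nat.mul_le_mul_right q hi'
    apply image_comp_swap_of_notMem <;> simp only [mem_Ico, not_and, not_lt] <;> intro <;>
      nlinarith
  · have : i + 1 = a := by omega
    subst this
    apply image_comp_swap_of_mem <;> simp only [mem_Ico] <;> constructor <;> nlinarith

lemma zero (f : ℕ → α) : IsMonoLoosePath χ c q 0 f where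
  injOn := by simp
  color_edge i hi := absurd hi (Nat.not_lt_zero i)

lemma exists_snoc (hf : IsMonoLoosePath χ c q a f) {S : Finset α}
    (hS : Disjoint S (loosePathVerts f q a)) (hSq : S.card = q)
    (hχ : χ (insert (f (q * a)) S) = c) :
    ∃ f', IsMonoLoosePath χ c q (a + 1) f' ∧
      loosePathVerts f' q (a + 1) = loosePathVerts f q a ∪ S ∧
      (lastBlock q (a + 1)).image f' = S := by
  have : Nonempty α := ⟨f 0⟩
  obtain ⟨g, hg⟩ := (range q).finite_toSet.exists_bijOn_of_encard_eq (t := (S : Set α))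
    (by rw [Set.encard_coe_eq_coe_finsetCard, Set.encard_coe_eq_coe_finsetCard, card_range, hSq])
  set f' : ℕ → α := fun m => if m ≤ q * a then f m else g (m - (q * a + 1))
  have hhead : ∀ m ≤ q * a, f' m = f m := fun m hm => if_pos hm
  have htail : (lastBlock q (a + 1)).image f' = S := by
    have : ∀ m ∈ lastBlock q (a + 1), f' m = (g ∘ (· - (q * a + 1))) m := fun m hm =>
      if_neg <| by rw [lastBlock_succ, mem_Ico] at hm; omega
    rw [image_congr this, ← image_image, lastBlock_succ, Nat.image_sub_const_Ico le_rfl,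
      Nat.sub_self, Nat.add_sub_cancel_left, ← range_eq_Ico, ← coe_inj, coe_image, hg.image_eq]
  have hverts : loosePathVerts f' q (a + 1) = loosePathVerts f q a ∪ S := by
    rw [loosePathVerts_succ, htail]
    congr 1
    exact image_congr fun m hm => hhead m (Nat.lt_succ_iff.mp (mem_range.mp hm))
  refine ⟨f', ⟨?_, fun i hi => ?_⟩, hverts, htail⟩
  · have hcard : (loosePathVerts f' q (a + 1)).card = (range (q * (a + 1) + 1)).card := by
      rw [hverts, card_union_of_disjoint hS.symm, hf.card_loosePathVerts, hSq, card_range,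
        Nat.mul_succ]
      omega
    simpa [← coe_range, Nat.lt_succ_iff] using injOn_of_card_image_eq hcard
  · rcases Nat.lt_succ_iff_lt_or_eq.mp hi with hi | rfl
    · rw [← hf.color_edge i hi]
      have : (i + 1) * q ≤ a * q := Nat.mul_le_mul_right q hi
      congr 1
      exact image_congr fun m hm => hhead m (by simp only [coe_Ico, Set.mem_Ico] at hm; nlinarith)
    · have hedge : Ico (i * q) (i * q + (q + 1)) = insert (q * i) (lastBlock q (i + 1)) := by
        rw [lastBlock_succ]; ext m; simp only [mem_Ico, mem_insert, mul_comm i q]; omega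
      rw [hedge, image_insert, htail, hhead _ le_rfl, hχ]

lemma exists_extend (hf : IsMonoLoosePath χ c q a f) {p : ℕ} (hp : p ∈ lastBlock q a)
    {S : Finset α} (hS : Disjoint S (loosePathVerts f q a)) (hSq : S.card = q)
    (hχ : χ (insert (f p) S) = c) {e : α} (he : e ∈ S) :
    ∃ f', IsMonoLoosePath χ c q (a + 1) f' ∧
      loosePathVerts f' q (a + 1) = loosePathVerts f q a ∪ S ∧ f' (q * (a + 1)) = e := by
  rw [← loosePathVerts_comp_swap f hp] at hS ⊢
  obtain ⟨f', hf', hverts, htail⟩ :=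
    (hf.comp_swap hp).exists_snoc hS hSq (by simpa using hχ)
  obtain ⟨p', hp', rfl⟩ := mem_image.mp (htail ▸ he)
  exact ⟨f' ∘ Equiv.swap p' (q * (a + 1)), hf'.comp_swap hp',
    (loosePathVerts_comp_swap f' hp').trans hverts, by simp⟩

end IsMonoLoosePath

def IsMonoLink (χ : Finset α → Fin r) (c : Fin r) (q : ℕ) (U : Finset α) (t : α) : Prop :=
  ∀ S ⊆ U, S.card = q → χ (insert t S) = c

lemma IsMonoLink.mono {χ : Finset α → Fin r} {c : Fin r} {q : ℕ} {U U' : Finset α} {t : α}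
    (h : IsMonoLink χ c q U t) (hU : U' ⊆ U) : IsMonoLink χ c q U' t :=
  fun S hS => h S (hS.trans hU)

-- The joints `f (q * j)` with `j` odd are taken from `T` and all other vertices from `U`, so that
-- every edge is `insert t S` with `t ∈ T` and `S ⊆ U`.
lemma exists_isMonoLoosePath_of_isMonoLink {χ : Finset α → Fin r} {c : Fin r} {q : ℕ}
    (hq : 0 < q) (a : ℕ) {T U : Finset α} (hTU : Disjoint T U) (hT : (a + 1) / 2 ≤ T.card)
    (hU : q * a + 1 ≤ U.card + (a + 1) / 2) (hlink : ∀ t ∈ T, IsMonoLink χ c q U t) :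
    ∃ f, IsMonoLoosePath χ c q a f ∧ loosePathVerts f q a ⊆ T ∪ U ∧
      f (q * a) ∈ if a % 2 = 1 then T else U := by
  induction a generalizing T U with
  | zero =>
    obtain ⟨u, hu⟩ : U.Nonempty := card_pos.mp (by omega)
    exact ⟨fun _ => u, .zero _, by simp [loosePathVerts_zero, hu], by simpa using hu⟩
  | succ a ih =>
    have hqa : q * (a + 1) = q * a + q := Nat.mul_succ q a
    have haq : a ≤ q * a := Nat.le_mul_of_pos_left a hq
    rcases Nat.mod_two_eq_zero_or_one a with ha | ha
    · -- the new edge ends at a fresh joint `t ∈ T`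
      obtain ⟨t, ht⟩ : T.Nonempty := card_pos.mp (by omega)
      obtain ⟨S, hSU, hSq⟩ := exists_subset_card_eq (s := U) (n := q - 1) (by omega)
      obtain ⟨f, hf, hfTU, hx⟩ := ih (T := T.erase t) (U := U \ S)
        (disjoint_of_subset_left (erase_subset t T) (hTU.mono_right sdiff_subset))
        (by rw [card_erase_of_mem ht]; omega) (by rw [card_sdiff_of_subset hSU]; omega)
        fun t' ht' => (hlink t' (mem_of_mem_erase ht')).mono sdiff_subset
      simp only [ha, zero_ne_one, if_false, mem_sdiff] at hx
      have htS : t ∉ S := by grind [disjoint_left]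
      have hdisj : Disjoint (insert t S) (loosePathVerts f q a) := by grind [disjoint_left]
      have hχ : χ (insert (f (q * a)) (insert t S)) = c := by
        rw [Finset.insert_comm]
        exact hlink t ht _ (insert_subset hx.1 hSU) (by rw [card_insert_of_notMem hx.2]; omega)
      obtain ⟨f', hf', hverts, hend⟩ := hf.exists_extend (self_mem_lastBlock hq a) hdisj
        (by rw [card_insert_of_notMem htS]; omega) hχ (mem_insert_self t S)
      refine ⟨f', hf', ?_, ?_⟩
      · grind
      · rw [if_pos (by omega), hend]
        exact ht
    · -- the new edge starts at the joint `f (q * a) ∈ T`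
      obtain ⟨S, hSU, hSq⟩ := exists_subset_card_eq (s := U) (n := q) (by omega)
      obtain ⟨f, hf, hfTU, hx⟩ := ih (T := T) (U := U \ S) (hTU.mono_right sdiff_subset)
        (by omega) (by rw [card_sdiff_of_subset hSU]; omega)
        fun t ht => (hlink t ht).mono sdiff_subset
      simp only [ha, if_true] at hx
      have hdisj : Disjoint S (loosePathVerts f q a) := by grind [disjoint_left]
      obtain ⟨e, he⟩ : S.Nonempty := card_pos.mp (by omega)
      obtain ⟨f', hf', hverts, hend⟩ := hf.exists_extend (self_mem_lastBlock hq a) hdisj hSq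
        (hlink _ hx S hSU hSq) he
      refine ⟨f', hf', ?_, ?_⟩
      · grind
      · rw [if_neg (by omega), hend]
        exact hSU he

section Search

variable [Fintype α] {χ : Finset α → Fin 2} {q ℓ : ℕ}

structure SearchState (χ : Finset α → Fin 2) (q ℓ : ℕ) where
  a : ℕ
  f : ℕ → α
  T : Finset α
  a_le : a ≤ ℓ
  card_T_lt : T.card < (ℓ + 1) / 2 + q
  isMonoLoosePath : IsMonoLoosePath χ 0 q a f
  disjoint : Disjoint (loosePathVerts f q a) T
  isMonoLink : ∀ t ∈ T, IsMonoLink χ 1 q (loosePathVerts f q a ∪ T)ᶜ t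

namespace SearchState

variable (s : SearchState χ q ℓ)

def unexplored : Finset α := (loosePathVerts s.f q s.a ∪ s.T)ᶜ

def potential : ℕ := q * s.a + 2 * s.T.card

lemma card_unexplored : s.unexplored.card + (q * s.a + 1) + s.T.card = Fintype.card α := by
  have h := card_le_univ (loosePathVerts s.f q s.a ∪ s.T)
  rw [card_union_of_disjoint s.disjoint, s.isMonoLoosePath.card_loosePathVerts] at h
  rw [unexplored, card_compl, card_union_of_disjoint s.disjoint,
    s.isMonoLoosePath.card_loosePathVerts]
  omega

lemma potential_lt : s.potential < 2 * Fintype.card α := by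
  have := s.card_unexplored
  unfold potential
  omega

lemma exists_push (hq : 0 < q) (ha : s.a < ℓ) {p : ℕ} (hp : p ∈ lastBlock q s.a)
    {S : Finset α} (hSU : S ⊆ s.unexplored) (hSq : S.card = q) (hχ : χ (insert (s.f p) S) = 0) :
    ∃ s' : SearchState χ q ℓ, s.potential < s'.potential := by
  obtain ⟨e, he⟩ : S.Nonempty := card_pos.mp (by omega)
  have hS : Disjoint S (loosePathVerts s.f q s.a ∪ s.T) := subset_compl_iff_disjoint_right.mp hSU
  obtain ⟨f', hf', hverts, -⟩ :=
    s.isMonoLoosePath.exists_extend hp (hS.mono_right subset_union_left) hSq hχ he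
  refine ⟨⟨s.a + 1, f', s.T, ha, s.card_T_lt, hf', ?_, fun t ht => ?_⟩, ?_⟩
  · rw [hverts]
    exact disjoint_union_left.mpr ⟨s.disjoint, hS.mono_right subset_union_right⟩
  · refine (s.isMonoLink t ht).mono (compl_subset_compl.mpr ?_)
    rw [hverts]
    exact union_subset_union subset_union_left subset_rfl
  · simp only [potential, Nat.mul_succ]
    omega

lemma exists_pop (hq : 0 < q) {b : ℕ} (hb : s.a = b + 1) (hT : s.T.card < (ℓ + 1) / 2)
    (hlink : ∀ p ∈ lastBlock q s.a, IsMonoLink χ 1 q s.unexplored (s.f p)) :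
    ∃ s' : SearchState χ q ℓ, s.potential < s'.potential := by
  revert hb hT hlink
  obtain ⟨a, f, T, ha, -, hf, hdisj, hTlink⟩ := s
  rintro rfl hT hlink
  dsimp only at hT hlink
  set C := (lastBlock q (b + 1)).image f
  have hCT : Disjoint C T := hdisj.mono_left (loosePathVerts_succ f q b ▸ subset_union_right)
  have hcard : (T ∪ C).card = T.card + q := by
    rw [card_union_of_disjoint hCT.symm, hf.card_image_lastBlock_succ]
  have hU : loosePathVerts f q b ∪ (T ∪ C) = loosePathVerts f q (b + 1) ∪ T := by
    rw [loosePathVerts_succ]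
    ac_rfl
  refine ⟨⟨b, f, T ∪ C, by omega, by omega, hf.of_succ, ?_, fun t ht => ?_⟩, ?_⟩
  · exact disjoint_union_right.mpr ⟨hdisj.mono_left (loosePathVerts_succ f q b ▸
      subset_union_left), hf.disjoint_image_lastBlock_succ⟩
  · rw [hU]
    rcases mem_union.mp ht with ht | ht
    · exact hTlink t ht
    · obtain ⟨p, hp, rfl⟩ := mem_image.mp ht
      exact hlink p hp
  · simp only [potential, hcard, Nat.mul_succ]
    omega

lemma exists_restart (hq : 0 < q) (hn : 2 * q * ℓ + q + 1 ≤ Fintype.card α) (ha : s.a = 0)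
    (hT : s.T.card < (ℓ + 1) / 2) (hlink : IsMonoLink χ 1 q s.unexplored (s.f 0)) :
    ∃ s' : SearchState χ q ℓ, s.potential < s'.potential := by
  obtain ⟨u, hu⟩ : s.unexplored.Nonempty := by
    have hcard := s.card_unexplored
    have : ℓ ≤ q * ℓ := Nat.le_mul_of_pos_left ℓ hq
    rw [ha, mul_zero] at hcard
    rw [Nat.mul_assoc] at hn
    exact card_pos.mp (by omega)
  revert ha hT hlink hu
  obtain ⟨a, f, T, -, -, -, hdisj, hTlink⟩ := s
  rintro rfl hT hlink hu
  simp only [unexplored, loosePathVerts_zero] at hT hlink hu hTlink hdisj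
  have hfT : f 0 ∉ T := disjoint_singleton_left.mp hdisj
  have hsub : ({u} ∪ insert (f 0) T)ᶜ ⊆ ({f 0} ∪ T)ᶜ :=
    compl_subset_compl.mpr (by rw [← insert_eq]; exact subset_insert _ _)
  refine ⟨⟨0, fun _ => u, insert (f 0) T, Nat.zero_le ℓ, ?_, .zero _, ?_, ?_⟩, ?_⟩
  · rw [card_insert_of_notMem hfT]; omega
  · rw [loosePathVerts_zero, disjoint_singleton_left]
    simpa [not_or] using hu
  · rw [loosePathVerts_zero]
    intro t ht
    rcases mem_insert.mp ht with rfl | ht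
    · exact hlink.mono hsub
    · exact (hTlink t ht).mono hsub
  · simp only [potential, card_insert_of_notMem hfT]
    omega

lemma exists_potential_lt (hq : 0 < q) (hn : 2 * q * ℓ + q + 1 ≤ Fintype.card α)
    (ha : s.a < ℓ) (hT : s.T.card < (ℓ + 1) / 2) :
    ∃ s' : SearchState χ q ℓ, s.potential < s'.potential := by
  by_cases hpush :
      ∃ p ∈ lastBlock q s.a, ∃ S ⊆ s.unexplored, S.card = q ∧ χ (insert (s.f p) S) = 0
  · obtain ⟨p, hp, S, hSU, hSq, hχ⟩ := hpush
    exact s.exists_push hq ha hp hSU hSq hχ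
  have hlink : ∀ p ∈ lastBlock q s.a, IsMonoLink χ 1 q s.unexplored (s.f p) :=
    fun p hp S hSU hSq => Fin.eq_one_of_ne_zero _ fun h => hpush ⟨p, hp, S, hSU, hSq, h⟩
  rcases Nat.eq_zero_or_eq_succ_pred s.a with h0 | hb
  · have h0mem : 0 ∈ lastBlock q s.a := by simpa [h0] using self_mem_lastBlock hq 0
    exact s.exists_restart hq hn h0 hT (hlink 0 h0mem)
  · exact s.exists_pop hq hb hT hlink

lemma exists_isMonoLoosePath_one (hq : 0 < q) (hn : 2 * q * ℓ + q + 1 ≤ Fintype.card α)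
    (ha : s.a < ℓ) (hT : (ℓ + 1) / 2 ≤ s.T.card) : ∃ f, IsMonoLoosePath χ 1 q ℓ f := by
  have hU : q * ℓ + 1 ≤ s.unexplored.card + (ℓ + 1) / 2 := by
    have := s.card_unexplored
    have := s.card_T_lt
    have : q * (s.a + 1) ≤ q * ℓ := Nat.mul_le_mul_left q ha
    rw [Nat.mul_succ] at this
    rw [Nat.mul_assoc] at hn
    omega
  obtain ⟨f, hf, -⟩ := exists_isMonoLoosePath_of_isMonoLink hq ℓ
    (disjoint_compl_right.mono_left subset_union_right) hT hU s.isMonoLink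
  exact ⟨f, hf⟩

lemma exists_terminal (hq : 0 < q) (hn : 2 * q * ℓ + q + 1 ≤ Fintype.card α) :
    ∃ s : SearchState χ q ℓ, s.a = ℓ ∨ (s.a < ℓ ∧ (ℓ + 1) / 2 ≤ s.T.card) := by
  obtain ⟨v⟩ : Nonempty α := Fintype.card_pos_iff.mp (by omega)
  let s₀ : SearchState χ q ℓ := ⟨0, fun _ => v, ∅, Nat.zero_le ℓ, by rw [card_empty]; omega,
    .zero _, disjoint_empty_right _, by simp⟩
  obtain ⟨s, -, hs⟩ := (measure fun s : SearchState χ q ℓ =>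
    2 * Fintype.card α - s.potential).wf.has_min Set.univ ⟨s₀, trivial⟩
  by_contra! hterm
  obtain ⟨s', hs'⟩ := s.exists_potential_lt hq hn (lt_of_le_of_ne s.a_le (hterm s).1)
    ((hterm s).2 (lt_of_le_of_ne s.a_le (hterm s).1))
  have := s.potential_lt
  exact hs s' trivial <|
    show 2 * Fintype.card α - s'.potential < 2 * Fintype.card α - s.potential by omega

end SearchState

theorem exists_isMonoLoosePath_of_two_colors (hq : 0 < q)
    (hn : 2 * q * ℓ + q + 1 ≤ Fintype.card α) (χ : Finset α → Fin 2) :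
    ∃ c f, IsMonoLoosePath χ c q ℓ f := by
  obtain ⟨s, hs | ⟨ha, hT⟩⟩ := SearchState.exists_terminal (χ := χ) hq hn
  · exact ⟨0, s.f, by have := s.isMonoLoosePath; rwa [hs] at this⟩
  · exact ⟨1, s.exists_isMonoLoosePath_one hq hn ha hT⟩

end Search

theorem loosePath_dfs_bound_two_colors_general (k ℓ : ℕ) (hk : 2 ≤ k)
    (n : ℕ) (hn : (2 * k - 2) * ℓ + k ≤ n) (χ : Finset (Fin n) → Fin 2) :
    HasMonoLoosePath k ℓ χ := by
  obtain ⟨q, rfl⟩ : ∃ q, k = q + 1 := ⟨k - 1, by omega⟩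
  have hn' : 2 * q * ℓ + q + 1 ≤ Fintype.card (Fin n) := by
    rw [Fintype.card_fin]
    rwa [show 2 * (q + 1) - 2 = 2 * q by omega] at hn
  obtain ⟨c, f, hf⟩ := exists_isMonoLoosePath_of_two_colors (by omega) hn' χ
  exact ⟨c, f, by simpa using hf.injOn, fun i hi => by simpa using hf.color_edge i hi⟩

theorem loosePath_dfs_bound_two_colors (k ℓ : ℕ) (hk : 2 ≤ k) (hl : 3 ≤ ℓ)
    (n : ℕ) (hn : (2 * k - 2) * ℓ + k ≤ n) (χ : Finset (Fin n) → Fin 2) :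
    HasMonoLoosePath k ℓ χ :=
  loosePath_dfs_bound_two_colors_general k ℓ hk n hn χ
end

section
/- For all integers k ≥ 3, ℓ ≥ 3, and 2 ≤ r ≤ k−1, and every integer n ≥ k(ℓ+1)r(1 + ln(1 + (r−1)/(k−r))), every coloring of the k-element subsets of an n-element set with r colors yields a monochromatic copy of the k-uniform loose path P_ℓ^(k) of length ℓ. -/
/-!
A *seed of level `c`* on a vertex set `A` is a `c`-set `t` disjoint from `A` such that every
`k`-set `t ∪ X` with `X ⊆ A` has color at least `c`. The empty set is a seed of level `0` on all
vertices, and no seed of level `r` exists on a set of at least `k - r` vertices.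

Given enough pairwise disjoint seeds of level `c`, a depth-first search grows a loose path of
color `c` whose edges are `(k - c)`-subsets of `A`, each completed by a seed of its own. If the
path cannot be extended at a free vertex `y` of its last edge through a fresh seed `t`, then
`insert y t` is a seed of level `c + 1`; an edge without free vertices is popped. Either the path
reaches length `ℓ`, or `M` seeds of level `c + 1` are produced at the cost of at most
`(ℓ - 1)(k - c - 1) + 1 + M` vertices. Over the levels `c = 0, …, r - 1` this costs at most
`r (ℓ + 1) k ≤ n` vertices, so some level ends with a monochromatic path.
-/

open Finset

namespace LoosePathRamsey

section General

variable {α : Type*}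

def glue (m : ℕ) (e g : ℕ → α) (i : ℕ) : α := if i < m then e i else g (i - m)

lemma glue_of_lt {m i : ℕ} {e g : ℕ → α} (hi : i < m) : glue m e g i = e i := if_pos hi

@[simp] lemma glue_add (m i : ℕ) (e g : ℕ → α) : glue m e g (i + m) = g i := by simp [glue]

lemma injOn_glue {m n : ℕ} {e g : ℕ → α} (he : Set.InjOn e (Set.Iio m))
    (hg : Set.InjOn g (Set.Iio n)) (hsep : ∀ i < m, ∀ j < n, e i ≠ g j) :
    Set.InjOn (glue m e g) (Set.Iio (m + n)) := by
  intro i hi j hj hij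
  simp only [Set.mem_Iio] at hi hj
  simp only [glue] at hij
  split_ifs at hij with him hjm hjm
  · exact he him hjm hij
  · exact absurd hij (hsep i him _ (by omega))
  · exact absurd hij.symm (hsep j hjm _ (by omega))
  · have := hg (show i - m < n by omega) (show j - m < n by omega) hij
    omega

variable [DecidableEq α]

lemma image_glue_Ico_add (m a b : ℕ) (e g : ℕ → α) :
    (Ico (a + m) (b + m)).image (glue m e g) = (Ico a b).image g := by
  rw [← image_add_right_Ico, image_image]
  simp [Function.comp_def]

lemma image_range_add_one_glue (m : ℕ) (e g : ℕ → α) :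
    (range (m + 1)).image (glue m e g) = insert (g 0) ((range m).image e) := by
  have hm : glue m e g m = g 0 := by simpa using glue_add m 0 e g
  rw [range_add_one, image_insert, hm, image_congr fun i hi ↦ glue_of_lt (mem_range.1 hi)]

lemma image_range_getD (L : List α) (x : α) :
    (range L.length).image (L.getD · x) = L.toFinset := by
  ext y
  simp only [mem_image, mem_range, List.mem_toFinset, List.mem_iff_getElem]
  constructor <;> rintro ⟨i, hi, rfl⟩ <;> exact ⟨i, hi, by simp [hi]⟩

lemma exists_image_range_eq (P : Finset α) {s : α} (hs : s ∈ P) :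
    ∃ g : ℕ → α, g 0 = s ∧ (range #P).image g = P := by
  let L := s :: (P.erase s).toList
  have hL : L.length = #P := by
    simp [L, card_erase_of_mem hs, Nat.sub_add_cancel (card_pos.2 ⟨s, hs⟩)]
  refine ⟨(L.getD · s), rfl, ?_⟩
  rw [← hL, image_range_getD]
  simp [L, insert_erase hs]

def vertexSet (l : List (Finset α)) : Finset α := l.foldr (· ∪ ·) ∅

@[simp] lemma vertexSet_nil : vertexSet ([] : List (Finset α)) = ∅ := rfl

@[simp] lemma vertexSet_cons (a : Finset α) (l : List (Finset α)) :
    vertexSet (a :: l) = a ∪ vertexSet l := rfl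

lemma mem_vertexSet {x : α} {l : List (Finset α)} : x ∈ vertexSet l ↔ ∃ a ∈ l, x ∈ a := by
  induction l with
  | nil => simp
  | cons a l ih => simp [ih]

lemma headD_subset_vertexSet (l : List (Finset α)) : l.headD ∅ ⊆ vertexSet l := by
  cases l <;> simp

def LooseChain : List (Finset α) → Prop
  | [] => True
  | [_] => True
  | a :: b :: l => #(a ∩ b) = 1 ∧ (∀ u ∈ l, Disjoint a u) ∧ LooseChain (b :: l)

namespace LooseChain

lemma tail {a : Finset α} {l : List (Finset α)} (h : LooseChain (a :: l)) : LooseChain l := by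
  cases l with
  | nil => trivial
  | cons b l => exact h.2.2

lemma inter_vertexSet {a : Finset α} {l : List (Finset α)} (h : LooseChain (a :: l)) :
    a ∩ vertexSet l = a ∩ l.headD ∅ := by
  cases l with
  | nil => simp
  | cons b l =>
    have hl : Disjoint a (vertexSet l) :=
      disjoint_left.2 fun x hxa hx ↦ by
        obtain ⟨u, hu, hxu⟩ := mem_vertexSet.1 hx
        exact disjoint_left.1 (h.2.1 u hu) hxa hxu
    simp [inter_union_distrib_left, disjoint_iff_inter_eq_empty.1 hl]

lemma card_inter_vertexSet_le {a : Finset α} {l : List (Finset α)} (h : LooseChain (a :: l)) :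
    #(a ∩ vertexSet l) ≤ 1 := by
  rw [h.inter_vertexSet]
  cases l with
  | nil => simp
  | cons b l => exact h.1.le

lemma card_vertexSet_le {d : ℕ} :
    ∀ {l : List (Finset α)}, LooseChain l → (∀ a ∈ l, #a = d) →
      #(vertexSet l) ≤ l.length * (d - 1) + 1
  | [], _, _ => by simp
  | [a], _, hd => by simp [hd a (by simp)]; omega
  | a :: b :: l, h, hd => by
    have ih := card_vertexSet_le h.tail fun u hu ↦ hd u (List.mem_cons_of_mem _ hu)
    have hinter : #(a ∩ vertexSet (b :: l)) = 1 := by rw [h.inter_vertexSet]; exact h.1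
    have := card_union_add_card_inter a (vertexSet (b :: l))
    simp only [vertexSet_cons, List.length_cons] at this ih hinter ⊢
    have := hd a (by simp)
    have : (l.length + 1 + 1) * (d - 1) = (l.length + 1) * (d - 1) + (d - 1) := by ring
    omega

lemma exists_exit {p : Finset α} {l : List (Finset α)} {s : α} (h : LooseChain (p :: l))
    (hp : 2 ≤ #p) (hs : s ∈ p) (hsl : s ∉ vertexSet l) :
    ∃ v ∈ p, v ≠ s ∧ (∀ e ∈ l.head?, v ∈ e) ∧ v ∉ vertexSet l.tail ∧
      p ∩ vertexSet l ⊆ {v} := by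
  cases l with
  | nil =>
    obtain ⟨v, hv, hvs⟩ := exists_mem_ne (by omega : 1 < #p) s
    exact ⟨v, hv, hvs, by simp, by simp, by simp⟩
  | cons q l =>
    obtain ⟨v, hv⟩ := card_eq_one.1 h.1
    have hvp : v ∈ p ∩ q := hv ▸ mem_singleton_self v
    refine ⟨v, (mem_inter.1 hvp).1, ?_, by simpa using (mem_inter.1 hvp).2, ?_, ?_⟩
    · rintro rfl
      exact hsl (by simp [(mem_inter.1 hvp).2])
    · intro hvl
      obtain ⟨u, hu, hvu⟩ := mem_vertexSet.1 hvl
      exact disjoint_left.1 (h.2.1 u hu) (mem_inter.1 hvp).1 hvu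
    · rw [h.inter_vertexSet, List.headD_cons, hv]

end LooseChain

def IsPathEnumeration (k : ℕ) (l : List (Finset α)) (s : α) (f : ℕ → α) : Prop :=
  f 0 = s ∧ Set.InjOn f (Set.Iio ((k - 1) * l.length + 1)) ∧
    (∀ i < (k - 1) * l.length + 1, f i ∈ insert s (vertexSet l)) ∧
    ∀ i (hi : i < l.length), (Ico (i * (k - 1)) (i * (k - 1) + k)).image f = l[i]

lemma isPathEnumeration_nil (k : ℕ) (s : α) : IsPathEnumeration k [] s fun _ ↦ s :=
  ⟨rfl, fun i hi j hj _ ↦ by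
    simp only [List.length_nil, mul_zero, zero_add, Set.mem_Iio] at hi hj; omega,
    fun _ _ ↦ mem_insert_self _ _, fun i hi ↦ by simp at hi⟩

lemma IsPathEnumeration.cons {k : ℕ} {p : Finset α} {l : List (Finset α)} {s v : α}
    {g : ℕ → α} (hk : 2 ≤ k) (hp : #p = k) (hs : s ∈ p) (hvp : v ∈ p) (hvs : v ≠ s)
    (hpv : p ∩ vertexSet l ⊆ {v}) (hg : IsPathEnumeration k l v g) :
    ∃ f, IsPathEnumeration k (p :: l) s f := by
  obtain ⟨hg0, hginj, hgmaps, hgblocks⟩ := hg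
  have hcardE : #(p.erase v) = k - 1 := by rw [card_erase_of_mem hvp, hp]
  obtain ⟨e, he0, heimg⟩ := exists_image_range_eq (p.erase v) (mem_erase.2 ⟨hvs.symm, hs⟩)
  rw [hcardE] at heimg
  have heinj : Set.InjOn e (Set.Iio (k - 1)) := by
    rw [← coe_range, ← card_image_iff, heimg, hcardE, card_range]
  have hemaps : ∀ i < k - 1, e i ∈ p.erase v :=
    fun i hi ↦ heimg ▸ mem_image_of_mem e (mem_range.2 hi)
  have hlen : (k - 1) * (p :: l).length + 1 = (k - 1) + ((k - 1) * l.length + 1) := by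
    simp only [List.length_cons]; ring
  refine ⟨glue (k - 1) e g, by rw [glue_of_lt (by omega), he0], ?_, ?_, ?_⟩
  · rw [hlen]
    refine injOn_glue heinj hginj fun i hi j hj hij ↦ ?_
    obtain ⟨hiv, hip⟩ := mem_erase.1 (hemaps i hi)
    rcases mem_insert.1 (hij ▸ hgmaps j hj) with hv | hl
    · exact hiv hv
    · exact hiv (mem_singleton.1 (hpv (mem_inter.2 ⟨hip, hl⟩)))
  · intro i hi
    rw [hlen] at hi
    by_cases him : i < k - 1
    · rw [glue_of_lt him]
      exact mem_insert_of_mem (mem_union_left _ (mem_of_mem_erase (hemaps i him)))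
    · obtain ⟨j, rfl⟩ : ∃ j, i = j + (k - 1) := ⟨i - (k - 1), by omega⟩
      rw [glue_add]
      rcases mem_insert.1 (hgmaps j (by omega)) with hv | hl
      · exact mem_insert_of_mem (by simp [hv, hvp])
      · exact mem_insert_of_mem (by simp [hl])
  · rintro (_ | m) hm
    · have hrange : Ico (0 * (k - 1)) (0 * (k - 1) + k) = range (k - 1 + 1) := by
        rw [Nat.sub_add_cancel (by omega), zero_mul, zero_add, range_eq_Ico]
      rw [hrange, image_range_add_one_glue, heimg, hg0]
      exact insert_erase hvp
    · have hIco : Ico ((m + 1) * (k - 1)) ((m + 1) * (k - 1) + k)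
          = Ico (m * (k - 1) + (k - 1)) (m * (k - 1) + k + (k - 1)) := by
        congr 1 <;> ring
      rw [hIco, image_glue_Ico_add]
      exact hgblocks m (by simpa using hm)

lemma LooseChain.exists_isPathEnumeration {k : ℕ} (hk : 2 ≤ k) :
    ∀ (l : List (Finset α)) (s : α), LooseChain l → (∀ e ∈ l, #e = k) →
      (∀ e ∈ l.head?, s ∈ e) → s ∉ vertexSet l.tail → ∃ f, IsPathEnumeration k l s f
  | [], s, _, _, _, _ => ⟨_, isPathEnumeration_nil k s⟩
  | p :: l, s, h, hcard, hs, hsl => by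
    simp only [List.head?_cons, Option.mem_def, Option.some.injEq, forall_eq',
      List.tail_cons] at hs hsl
    have hp : #p = k := hcard p (by simp)
    obtain ⟨v, hvp, hvs, hvhead, hvtail, hpv⟩ := h.exists_exit (by omega) hs hsl
    obtain ⟨g, hg⟩ := exists_isPathEnumeration hk l v h.tail
      (fun e he ↦ hcard e (List.mem_cons_of_mem _ he)) hvhead hvtail
    exact hg.cons hk hp hs hvp hvs hpv

lemma union_inter_union_eq {a b X Y : Finset α} (hab : Disjoint a b) (haY : Disjoint a Y)
    (hXb : Disjoint X b) : (a ∪ X) ∩ (b ∪ Y) = X ∩ Y := by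
  rw [disjoint_left] at hab haY hXb
  ext x
  simp only [mem_inter, mem_union]
  have := @hab x
  have := @haY x
  have := @hXb x
  tauto

lemma LooseChain.map_union {ι : Type*} {g : ι → Finset α}
    (hg : Pairwise fun i j ↦ Disjoint (g i) (g j)) :
    ∀ {S : List (Finset α × ι)}, LooseChain (S.map Prod.fst) → (S.map Prod.snd).Nodup →
      (∀ p ∈ S, ∀ i, Disjoint (g i) p.1) → LooseChain (S.map fun p ↦ g p.2 ∪ p.1)
  | [], _, _, _ => trivial
  | [_], _, _, _ => trivial
  | p :: q :: S, h, hn, hd => by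
    have key : ∀ x ∈ q :: S, (g p.2 ∪ p.1) ∩ (g x.2 ∪ x.1) = p.1 ∩ x.1 := by
      intro x hx
      have hne : p.2 ≠ x.2 := fun he ↦
        (List.nodup_cons.1 hn).1 (he ▸ List.mem_map_of_mem (f := Prod.snd) hx)
      exact union_inter_union_eq (hg hne) (hd x (List.mem_cons_of_mem _ hx) _)
        (hd p (by simp) _).symm
    refine ⟨?_, ?_, map_union hg (S := q :: S) h.2.2 (List.nodup_cons.1 hn).2
      fun x hx ↦ hd x (List.mem_cons_of_mem _ hx)⟩
    · rw [key q (by simp)]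
      exact h.1
    · simp only [List.mem_map]
      rintro _ ⟨x, hx, rfl⟩
      rw [disjoint_iff_inter_eq_empty, key x (by simp [hx]),
        ← disjoint_iff_inter_eq_empty]
      exact h.2.1 x.1 (List.mem_map_of_mem hx)

section Seeds

variable {r : ℕ} (χ : Finset α → Fin r) (k : ℕ)

def CompletionsColorGe (A t : Finset α) (c : ℕ) : Prop :=
  ∀ X ⊆ A, #X + #t = k → c ≤ χ (t ∪ X)

def IsSeedList (A : Finset α) (c : ℕ) (T : List (Finset α)) : Prop :=
  T.Pairwise Disjoint ∧ ∀ t ∈ T, #t = c ∧ Disjoint t A ∧ CompletionsColorGe χ k A t c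

def LiftedSeeds (ℓ M d c : ℕ) (A₀ : Finset α) : Prop :=
  ∃ A ⊆ A₀, ∃ U : List (Finset α), U.length = M ∧ IsSeedList χ k A (c + 1) U ∧
    #A₀ ≤ #A + ((ℓ - 1) * (d - 1) + 1 + M)

lemma isSeedList_replicate_empty (A : Finset α) (m : ℕ) :
    IsSeedList χ k A 0 (List.replicate m ∅) :=
  ⟨List.pairwise_replicate.2 (.inr (disjoint_empty_left _)), by simp [CompletionsColorGe]⟩

variable {χ k}

lemma CompletionsColorGe.mono {A B t : Finset α} {c : ℕ} (h : CompletionsColorGe χ k A t c)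
    (hBA : B ⊆ A) : CompletionsColorGe χ k B t c :=
  fun X hX ↦ h X (hX.trans hBA)

lemma CompletionsColorGe.insert_of_ne {A B t : Finset α} {c : ℕ} {y : α}
    (ht : CompletionsColorGe χ k A t c) (hyA : y ∈ A) (hyt : y ∉ t) (hBA : B ⊆ A) (hyB : y ∉ B)
    (hno : ∀ X ⊆ B, #X + #t + 1 = k → (χ (t ∪ insert y X) : ℕ) ≠ c) :
    CompletionsColorGe χ k B (insert y t) (c + 1) := by
  intro X hX hXk
  rw [card_insert_of_notMem hyt] at hXk
  have hyX : y ∉ X := fun h ↦ hyB (hX h)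
  have hge := ht (insert y X) (insert_subset hyA (hX.trans hBA))
    (by rw [card_insert_of_notMem hyX]; omega)
  have hne := hno X hX (by omega)
  rw [insert_union, ← union_insert]
  omega

lemma IsSeedList.pairwise_disjoint_get {A : Finset α} {c : ℕ} {T : List (Finset α)}
    (hT : IsSeedList χ k A c T) : Pairwise fun i j ↦ Disjoint (T.get i) (T.get j) := by
  intro i j hij
  rcases lt_or_gt_of_ne hij with h | h
  · exact List.pairwise_iff_get.1 hT.1 i j h
  · exact (List.pairwise_iff_get.1 hT.1 j i h).symm

lemma IsSeedList.get {A : Finset α} {c : ℕ} {T : List (Finset α)} (hT : IsSeedList χ k A c T)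
    (i : Fin T.length) :
    #(T.get i) = c ∧ Disjoint (T.get i) A ∧ CompletionsColorGe χ k A (T.get i) c :=
  hT.2 _ (List.get_mem T i)

end Seeds

end General

theorem hasMonoLoosePath_of_looseChain {α : Type} [DecidableEq α] [Nonempty α] {r k ℓ : ℕ}
    {χ : Finset α → Fin r} {c : Fin r} {l : List (Finset α)} (hk : 2 ≤ k) (h : LooseChain l)
    (hlen : l.length = ℓ) (hcard : ∀ e ∈ l, #e = k) (hcol : ∀ e ∈ l, χ e = c) :
    HasMonoLoosePath k ℓ χ := by
  obtain ⟨s, hs, hsl⟩ : ∃ s, (∀ e ∈ l.head?, s ∈ e) ∧ s ∉ vertexSet l.tail := by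
    cases l with
    | nil => exact ⟨Classical.arbitrary α, by simp, by simp⟩
    | cons p l =>
      have : #(p ∩ vertexSet l) < #p := by
        have := h.card_inter_vertexSet_le
        rw [hcard p (by simp)]
        omega
      obtain ⟨s, hs, hsl⟩ := exists_mem_notMem_of_card_lt_card this
      exact ⟨s, by simpa using hs, fun h ↦ hsl (mem_inter.2 ⟨hs, h⟩)⟩
  obtain ⟨f, -, hinj, -, hblocks⟩ := h.exists_isPathEnumeration hk l s hcard hs hsl
  subst hlen
  exact ⟨c, f, hinj, fun i hi ↦ by rw [hblocks i hi]; exact hcol _ (List.getElem_mem hi)⟩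

section Search

variable {α : Type} [DecidableEq α] {r : ℕ} (χ : Finset α → Fin r) (k ℓ M d : ℕ) (c : Fin r)
  (A₀ : Finset α) (T : List (Finset α))

/-- Invariant of the depth-first search for a loose path of color `c` whose edges are `d`-sets
of `A₀` completed by distinct seeds from `T`: `A` holds the unused vertices, `S` the stack (top
first) of `d`-sets with the index of their seed, and `E` the emitted pairs (seed index, vertex),
each of which yields a seed of the next color. -/
structure SearchInvariant (A : Finset α) (S : List (Finset α × Fin T.length))
    (E : List (Fin T.length × α)) : Prop where
  subset : A ⊆ A₀
  length_stack_le : S.length ≤ ℓ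
  length_emitted_le : E.length ≤ M
  looseChain : LooseChain (S.map Prod.fst)
  stack : ∀ p ∈ S, #p.1 = d ∧ p.1 ⊆ A₀ ∧ Disjoint p.1 A ∧ χ (T.get p.2 ∪ p.1) = c
  nodup_index : (S.map Prod.snd ++ E.map Prod.fst).Nodup
  nodup_emitted : (E.map Prod.snd).Nodup
  emitted : ∀ e ∈ E, e.2 ∈ A₀ ∧ e.2 ∉ A ∧
    CompletionsColorGe χ k A (insert e.2 (T.get e.1)) ((c : ℕ) + 1)
  cover : A₀ ⊆ A ∪ vertexSet (S.map Prod.fst) ∪ (E.map Prod.snd).toFinset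

variable {ι : Type*}

-- A push moves `a ≥ 1` vertices from `A` to the stack, which changes the measure by `-3a + a + 1`.
def searchMeasure (A : Finset α) (S : List (Finset α × ι)) (E : List (ι × α)) : ℕ :=
  3 * #A + #(vertexSet (S.map Prod.fst) \ (E.map Prod.snd).toFinset) + S.length

def anchors (A Y : Finset α) : List (Finset α) → Finset α
  | [] => A
  | p :: l => p \ (Y ∪ l.headD ∅)

variable {χ k ℓ M d c A₀ T}

lemma SearchInvariant.init : SearchInvariant χ k ℓ M d c A₀ T A₀ [] [] where
  subset := subset_rfl
  length_stack_le := Nat.zero_le _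
  length_emitted_le := Nat.zero_le _
  looseChain := trivial
  stack := by simp
  nodup_index := List.nodup_nil
  nodup_emitted := List.nodup_nil
  emitted := by simp
  cover := by simp

namespace SearchInvariant

variable {A : Finset α} {S : List (Finset α × Fin T.length)} {E : List (Fin T.length × α)}

lemma vertexSet_subset (hI : SearchInvariant χ k ℓ M d c A₀ T A S E) :
    vertexSet (S.map Prod.fst) ⊆ A₀ := by
  intro x hx
  obtain ⟨_, ha, hxa⟩ := mem_vertexSet.1 hx
  obtain ⟨p, hp, rfl⟩ := List.mem_map.1 ha
  exact (hI.stack p hp).2.1 hxa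

theorem hasMonoLoosePath [Nonempty α] (hT : IsSeedList χ k A₀ c T) (hd : 2 ≤ d)
    (hcd : (c : ℕ) + d = k) (hI : SearchInvariant χ k ℓ M d c A₀ T A S E) (hS : S.length = ℓ) :
    HasMonoLoosePath k ℓ χ := by
  have hdisj : ∀ p ∈ S, ∀ i, Disjoint (T.get i) p.1 :=
    fun p hp i ↦ (hT.get i).2.1.mono_right (hI.stack p hp).2.1
  refine hasMonoLoosePath_of_looseChain (c := c) (by omega)
    (hI.looseChain.map_union hT.pairwise_disjoint_get hI.nodup_index.of_append_left hdisj)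
    (by simpa using hS) ?_ ?_
  all_goals
    simp only [List.mem_map]
    rintro _ ⟨p, hp, rfl⟩
  · rw [card_union_of_disjoint (hdisj p hp _), (hT.get _).1, (hI.stack p hp).1, hcd]
  · exact (hI.stack p hp).2.2.2

theorem liftedSeeds (hT : IsSeedList χ k A₀ c T) (hI : SearchInvariant χ k ℓ M d c A₀ T A S E)
    (hS : S.length < ℓ) (hE : E.length = M) : LiftedSeeds χ k ℓ M d c A₀ := by
  have hnot : ∀ e ∈ E, ∀ i, e.2 ∉ T.get i :=
    fun e he i h ↦ disjoint_left.1 (hT.get i).2.1 h (hI.emitted e he).1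
  refine ⟨A, hI.subset, E.map fun e ↦ insert e.2 (T.get e.1), by simp [hE], ⟨?_, ?_⟩, ?_⟩
  · have hidx := hI.nodup_index.of_append_right
    have hy := hI.nodup_emitted
    rw [List.Nodup, List.pairwise_map] at hidx hy
    rw [List.pairwise_map]
    refine (hidx.and hy).imp_of_mem fun {a b} ha hb hab ↦ ?_
    rw [disjoint_insert_left, disjoint_insert_right, mem_insert, not_or]
    exact ⟨⟨hab.2, hnot a ha _⟩, hnot b hb _, hT.pairwise_disjoint_get hab.1⟩
  · simp only [List.mem_map]
    rintro _ ⟨e, he, rfl⟩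
    refine ⟨by rw [card_insert_of_notMem (hnot e he _), (hT.get _).1], ?_, (hI.emitted e he).2.2⟩
    rw [disjoint_insert_left]
    exact ⟨(hI.emitted e he).2.1, (hT.get _).2.1.mono_right hI.subset⟩
  · have hV := LooseChain.card_vertexSet_le hI.looseChain (d := d)
      (by simpa using fun p hp ↦ (hI.stack p hp).1)
    have hY := (E.map Prod.snd).toFinset_card_le
    have hcover := (card_le_card hI.cover).trans (card_union_le _ _)
    have := card_union_le A (vertexSet (S.map Prod.fst))
    have := Nat.mul_le_mul_right (d - 1) (show S.length ≤ ℓ - 1 by omega)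
    simp only [List.length_map] at hV hY
    omega

theorem push (hd : 2 ≤ d) (hI : SearchInvariant χ k ℓ M d c A₀ T A S E) (hS : S.length < ℓ)
    {i : Fin T.length} (hi : i ∉ S.map Prod.snd ++ E.map Prod.fst) {X : Finset α}
    (hX : LooseChain (X :: S.map Prod.fst)) (hXd : #X = d)
    (hXA : X ⊆ A ∪ vertexSet (S.map Prod.fst)) (hcol : χ (T.get i ∪ X) = c) :
    SearchInvariant χ k ℓ M d c A₀ T (A \ X) ((X, i) :: S) E ∧
      searchMeasure (A \ X) ((X, i) :: S) E < searchMeasure A S E := by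
  have hXA₀ : X ⊆ A₀ := hXA.trans (union_subset hI.subset hI.vertexSet_subset)
  refine ⟨⟨sdiff_subset.trans hI.subset, by simpa using hS, hI.length_emitted_le, hX, ?_, ?_,
    hI.nodup_emitted, fun e he ↦ ?_, ?_⟩, ?_⟩
  · rintro p (_ | ⟨_, hp⟩)
    · exact ⟨hXd, hXA₀, sdiff_disjoint.symm, hcol⟩
    · obtain ⟨h₁, h₂, h₃, h₄⟩ := hI.stack p hp
      exact ⟨h₁, h₂, h₃.mono_right sdiff_subset, h₄⟩
  · rw [List.map_cons, List.cons_append]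
    exact List.nodup_cons.2 ⟨hi, hI.nodup_index⟩
  · obtain ⟨h₁, h₂, h₃⟩ := hI.emitted e he
    exact ⟨h₁, fun h ↦ h₂ (mem_sdiff.1 h).1, h₃.mono sdiff_subset⟩
  · intro x hx
    have := hI.cover hx
    by_cases hxX : x ∈ X <;> simp_all
  · simp only [searchMeasure, List.map_cons, vertexSet_cons, List.length_cons]
    set V := vertexSet (S.map Prod.fst)
    set Y := (E.map Prod.snd).toFinset
    have hXV : #(X ∩ V) ≤ 1 := hX.card_inter_vertexSet_le
    have hsplit : X ⊆ A ∩ X ∪ X ∩ V := fun x hx ↦ by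
      rcases mem_union.1 (hXA hx) with h | h <;> simp [h, hx]
    have hnew : (X ∪ V) \ Y ⊆ A ∩ X ∪ V \ Y := fun x hx ↦ by
      simp only [mem_sdiff, mem_union] at hx
      rcases hx with ⟨hx | hx, hxY⟩
      · rcases mem_union.1 (hXA hx) with h | h <;> simp [h, hx, hxY]
      · simp [hx, hxY]
    have h₁ := (card_le_card hsplit).trans (card_union_le _ _)
    have h₂ := (card_le_card hnew).trans (card_union_le _ _)
    have h₃ := card_sdiff_add_card_inter A X
    omega

theorem emit (hT : IsSeedList χ k A₀ c T) (hcd : (c : ℕ) + d = k)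
    (hI : SearchInvariant χ k ℓ M d c A₀ T A S E) (hE : E.length < M) {i : Fin T.length}
    (hi : i ∉ S.map Prod.snd ++ E.map Prod.fst) {y : α}
    (hyA : y ∈ A ∪ vertexSet (S.map Prod.fst)) (hyE : y ∉ E.map Prod.snd)
    (hno : ∀ X ⊆ A.erase y, #X + 1 = d → χ (T.get i ∪ insert y X) ≠ c) :
    SearchInvariant χ k ℓ M d c A₀ T (A.erase y) S ((i, y) :: E) ∧
      searchMeasure (A.erase y) S ((i, y) :: E) < searchMeasure A S E := by
  have hyA₀ : y ∈ A₀ := union_subset hI.subset hI.vertexSet_subset hyA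
  obtain ⟨hTc, hTA, hTcol⟩ := hT.get i
  have hyT : y ∉ T.get i := fun h ↦ disjoint_left.1 hTA h hyA₀
  have hseed : CompletionsColorGe χ k (A.erase y) (insert y (T.get i)) ((c : ℕ) + 1) :=
    hTcol.insert_of_ne hyA₀ hyT ((erase_subset _ _).trans hI.subset) (notMem_erase y A)
      fun X hX hXk ↦ Fin.val_injective.ne (hno X hX (by omega))
  refine ⟨⟨(erase_subset _ _).trans hI.subset, hI.length_stack_le, by simpa using hE,
    hI.looseChain, fun p hp ↦ ?_, ?_, List.nodup_cons.2 ⟨hyE, hI.nodup_emitted⟩, ?_, ?_⟩, ?_⟩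
  · obtain ⟨h₁, h₂, h₃, h₄⟩ := hI.stack p hp
    exact ⟨h₁, h₂, h₃.mono_right (erase_subset _ _), h₄⟩
  · rw [List.map_cons, List.nodup_middle, List.nodup_cons]
    exact ⟨hi, hI.nodup_index⟩
  · rintro e (_ | ⟨_, he⟩)
    · exact ⟨hyA₀, notMem_erase y A, hseed⟩
    · obtain ⟨h₁, h₂, h₃⟩ := hI.emitted e he
      exact ⟨h₁, fun h ↦ h₂ (mem_of_mem_erase h), h₃.mono (erase_subset _ _)⟩
  · intro x hx
    have := hI.cover hx
    by_cases hxy : x = y <;> simp_all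
  · have hY : vertexSet (S.map Prod.fst) \ (((i, y) :: E).map Prod.snd).toFinset
        = (vertexSet (S.map Prod.fst) \ (E.map Prod.snd).toFinset).erase y := by
      simp [sdiff_insert]
    simp only [searchMeasure, hY]
    rcases mem_union.1 hyA with h | h
    · have := card_erase_lt_of_mem h
      have := card_erase_le (s := vertexSet (S.map Prod.fst) \ (E.map Prod.snd).toFinset) (a := y)
      omega
    · have := card_erase_lt_of_mem (mem_sdiff.2 ⟨h, fun h' ↦ hyE (List.mem_toFinset.1 h')⟩)
      have := card_erase_le (s := A) (a := y)
      omega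

theorem pop {p : Finset α × Fin T.length} (hI : SearchInvariant χ k ℓ M d c A₀ T A (p :: S) E)
    (hp : p.1 ⊆ (E.map Prod.snd).toFinset ∪ (S.map Prod.fst).headD ∅) :
    SearchInvariant χ k ℓ M d c A₀ T A S E ∧ searchMeasure A S E < searchMeasure A (p :: S) E := by
  have hpV := hp.trans (union_subset_union_right (headD_subset_vertexSet _))
  refine ⟨⟨hI.subset, by have := hI.length_stack_le; simp at this; omega, hI.length_emitted_le,
    hI.looseChain.tail, fun q hq ↦ hI.stack q (List.mem_cons_of_mem _ hq),
    (List.nodup_cons.1 hI.nodup_index).2, hI.nodup_emitted, hI.emitted, ?_⟩, ?_⟩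
  · intro x hx
    have := hI.cover hx
    simp only [mem_union, List.map_cons, vertexSet_cons] at this ⊢
    by_cases hxp : x ∈ p.1
    · have := mem_union.1 (hpV hxp)
      tauto
    · tauto
  · have : #(vertexSet (S.map Prod.fst) \ (E.map Prod.snd).toFinset)
        ≤ #(vertexSet ((p :: S).map Prod.fst) \ (E.map Prod.snd).toFinset) :=
      card_le_card (sdiff_subset_sdiff (by simp) le_rfl)
    simp only [searchMeasure, List.length_cons]
    omega

lemma anchor_mem (hI : SearchInvariant χ k ℓ M d c A₀ T A S E) {y : α}
    (hy : y ∈ anchors A (E.map Prod.snd).toFinset (S.map Prod.fst)) :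
    y ∈ A ∪ vertexSet (S.map Prod.fst) ∧ y ∉ E.map Prod.snd := by
  cases S with
  | nil => exact ⟨mem_union_left _ hy, fun h ↦ by
      obtain ⟨e, he, rfl⟩ := List.mem_map.1 h
      exact (hI.emitted e he).2.1 hy⟩
  | cons p S =>
    simp only [List.map_cons, anchors, mem_sdiff, mem_union, not_or, List.mem_toFinset] at hy
    exact ⟨by simp [hy.1], hy.2.1⟩

lemma looseChain_insert_anchor (hI : SearchInvariant χ k ℓ M d c A₀ T A S E) {y : α}
    (hy : y ∈ anchors A (E.map Prod.snd).toFinset (S.map Prod.fst)) {X : Finset α}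
    (hX : X ⊆ A) : LooseChain (insert y X :: S.map Prod.fst) := by
  cases S with
  | nil => trivial
  | cons p S =>
    simp only [List.map_cons, anchors, mem_sdiff, mem_union, not_or] at hy
    obtain ⟨hyp, -, hyS⟩ := hy
    have hXp : Disjoint X p.1 := ((hI.stack p (by simp)).2.2.1.mono_right hX).symm
    have hyS' : y ∉ vertexSet (S.map Prod.fst) := fun h ↦
      hyS (mem_inter.1 (hI.looseChain.inter_vertexSet ▸ mem_inter.2 ⟨hyp, h⟩)).2
    refine ⟨?_, ?_, hI.looseChain⟩
    · rw [insert_inter_of_mem hyp, disjoint_iff_inter_eq_empty.1 hXp]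
      simp
    · simp only [List.mem_map]
      rintro _ ⟨q, hq, rfl⟩
      rw [disjoint_insert_left]
      exact ⟨fun h ↦ hyS' (mem_vertexSet.2 ⟨q.1, List.mem_map_of_mem hq, h⟩),
        ((hI.stack q (by simp [hq])).2.2.1.mono_right hX).symm⟩

theorem step [Nonempty α] (hT : IsSeedList χ k A₀ c T) (hd : 2 ≤ d) (hcd : (c : ℕ) + d = k)
    (hTlen : ℓ + M ≤ T.length + 1) (hM : M ≤ #A₀) (hI : SearchInvariant χ k ℓ M d c A₀ T A S E) :
    HasMonoLoosePath k ℓ χ ∨ LiftedSeeds χ k ℓ M d c A₀ ∨ ∃ A' S' E',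
      SearchInvariant χ k ℓ M d c A₀ T A' S' E' ∧ searchMeasure A' S' E' < searchMeasure A S E := by
  obtain hS | hS := hI.length_stack_le.lt_or_eq
  swap
  · exact .inl (hI.hasMonoLoosePath hT hd hcd hS)
  obtain hE | hE := hI.length_emitted_le.lt_or_eq
  swap
  · exact .inr (.inl (hI.liftedSeeds hT hS hE))
  refine .inr (.inr ?_)
  obtain ⟨i, hi⟩ : ∃ i : Fin T.length, i ∉ S.map Prod.snd ++ E.map Prod.fst :=
    Cardinal.exists_notMem_of_length_lt _ (by rw [Cardinal.mk_fin]; norm_cast; simp; omega)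
  obtain ⟨y, hy⟩ | hnone :=
    (anchors A (E.map Prod.snd).toFinset (S.map Prod.fst)).eq_empty_or_nonempty.symm
  · obtain ⟨hyA, hyE⟩ := hI.anchor_mem hy
    by_cases hX : ∃ X ⊆ A.erase y, #X + 1 = d ∧ χ (T.get i ∪ insert y X) = c
    · obtain ⟨X, hXA, hXd, hXc⟩ := hX
      have hyX : y ∉ X := fun h ↦ notMem_erase y A (hXA h)
      exact ⟨_, _, _, hI.push hd hS hi
        (hI.looseChain_insert_anchor hy (hXA.trans (erase_subset _ _)))
        (by rw [card_insert_of_notMem hyX, hXd])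
        (insert_subset hyA ((hXA.trans (erase_subset _ _)).trans subset_union_left)) hXc⟩
    · push Not at hX
      exact ⟨_, _, _, hI.emit hT hcd hE hi hyA hyE hX⟩
  · cases S with
    | nil =>
      simp only [List.map_nil, anchors] at hnone
      have hcover := (card_le_card hI.cover).trans (card_union_le _ _)
      have := (E.map Prod.snd).toFinset_card_le
      simp only [hnone, List.map_nil, vertexSet_nil, union_empty, card_empty, zero_add,
        List.length_map] at hcover this
      omega
    | cons p S => exact ⟨_, _, _, hI.pop (sdiff_eq_empty_iff_subset.1 hnone)⟩

end SearchInvariant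

theorem hasMonoLoosePath_or_liftedSeeds [Nonempty α] (hT : IsSeedList χ k A₀ c T)
    (hd : 2 ≤ d) (hcd : (c : ℕ) + d = k) (hTlen : ℓ + M ≤ T.length + 1) (hM : M ≤ #A₀) :
    HasMonoLoosePath k ℓ χ ∨ LiftedSeeds χ k ℓ M d c A₀ := by
  suffices h : ∀ n A S E, SearchInvariant χ k ℓ M d c A₀ T A S E → searchMeasure A S E = n →
      HasMonoLoosePath k ℓ χ ∨ LiftedSeeds χ k ℓ M d c A₀ from
    h _ _ _ _ .init rfl
  intro n
  induction n using Nat.strong_induction_on with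
  | _ n ih =>
  rintro A S E hI rfl
  rcases hI.step hT hd hcd hTlen hM with h | h | ⟨A', S', E', hI', hlt⟩
  exacts [.inl h, .inr h, ih _ hlt _ _ _ hI' rfl]

end Search

theorem hasMonoLoosePath_of_isSeedList {α : Type} [DecidableEq α] [Nonempty α] {r k ℓ : ℕ}
    (χ : Finset α → Fin r) (hrk : r < k) :
    ∀ j c d (A : Finset α) (T : List (Finset α)), c + j = r → c + d = k →
      IsSeedList χ k A c T → j * (ℓ - 1) + 1 ≤ T.length →
      d + j + (ℓ - 1) * j * (d - 1) ≤ #A → HasMonoLoosePath k ℓ χ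
  | 0, c, d, A, T, hcj, hcd, hT, hTlen, hA => by
    obtain ⟨X, hXA, hXd⟩ := exists_subset_card_eq (show d ≤ #A by omega)
    obtain ⟨htc, -, htcol⟩ := hT.get ⟨0, by omega⟩
    have := htcol X hXA (by omega)
    have := (χ (T.get ⟨0, by omega⟩ ∪ X)).isLt
    omega
  | j + 1, c, d, A, T, hcj, hcd, hT, hTlen, hA => by
    obtain ⟨L, hL⟩ : ∃ L, ℓ - 1 = L := ⟨_, rfl⟩
    obtain ⟨D, rfl⟩ : ∃ D, d = D + 2 := ⟨d - 2, by omega⟩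
    simp only [hL, show D + 2 - 1 = D + 1 by omega] at hTlen hA ⊢
    have hM : j * L + 1 ≤ #A := by nlinarith
    have hTlen' : ℓ + (j * L + 1) ≤ T.length + 1 := by
      have : (j + 1) * L = j * L + L := by ring
      omega
    obtain h | ⟨A', -, U, hU, hUseed, hcard⟩ :=
      hasMonoLoosePath_or_liftedSeeds (c := ⟨c, by omega⟩) hT (by omega) hcd hTlen' hM
    · exact h
    refine hasMonoLoosePath_of_isSeedList χ hrk j (c + 1) (D + 1) A' U (by omega) (by omega)
      hUseed (by rw [hU, hL]) ?_
    rw [hL, show D + 1 - 1 = D by omega]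
    simp only [hL, show D + 2 - 1 = D + 1 by omega] at hcard
    nlinarith

lemma mul_le_of_le_mul_one_add_log {k ℓ r n : ℕ} (hr : 1 ≤ r) (hrk : r < k)
    (hn : (k : ℝ) * (ℓ + 1) * r * (1 + Real.log (1 + ((r : ℝ) - 1) / ((k : ℝ) - r))) ≤ n) :
    r * (ℓ + 1) * k ≤ n := by
  have hr' : (1 : ℝ) ≤ r := by exact_mod_cast hr
  have hk : (r : ℝ) < k := by exact_mod_cast hrk
  have hlog : 0 ≤ Real.log (1 + ((r : ℝ) - 1) / ((k : ℝ) - r)) :=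
    Real.log_nonneg (le_add_of_nonneg_right (div_nonneg (by linarith) (by linarith)))
  have : (0 : ℝ) ≤ k * (ℓ + 1) * r := by positivity
  have : ((r * (ℓ + 1) * k : ℕ) : ℝ) ≤ n := by
    push_cast
    nlinarith [mul_nonneg this hlog]
  exact_mod_cast this

end LoosePathRamsey

theorem loosePath_dfs_bound_cor_general (k ℓ r : ℕ) (hr2 : 2 ≤ r)
    (hrk : r ≤ k - 1) (n : ℕ)
    (hn : (k : ℝ) * (ℓ + 1) * r *
        (1 + Real.log (1 + ((r : ℝ) - 1) / ((k : ℝ) - r))) ≤ n)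
    (χ : Finset (Fin n) → Fin r) :
    HasMonoLoosePath k ℓ χ := by
  have hrk' : r < k := by omega
  have hkn := LoosePathRamsey.mul_le_of_le_mul_one_add_log (by omega) hrk' hn
  have : Nonempty (Fin n) :=
    ⟨⟨0, (Nat.mul_pos (Nat.mul_pos (by omega) (by omega)) (by omega)).trans_le hkn⟩⟩
  refine LoosePathRamsey.hasMonoLoosePath_of_isSeedList χ hrk' r 0 k univ
    (List.replicate (r * (ℓ - 1) + 1) ∅) (by simp) (by simp)
    (LoosePathRamsey.isSeedList_replicate_empty χ k univ _) (by simp) ?_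
  rw [card_univ, Fintype.card_fin]
  have h₁ : r * (ℓ - 1 + 1) * k ≤ n :=
    (Nat.mul_le_mul_right _ (Nat.mul_le_mul_left _ (by omega))).trans hkn
  have h₂ : (ℓ - 1) * r * (k - 1) ≤ (ℓ - 1) * r * k := Nat.mul_le_mul_left _ (by omega)
  have h₃ : k + r ≤ r * k := by nlinarith
  have h₄ : r * (ℓ - 1 + 1) * k = (ℓ - 1) * r * k + r * k := by ring
  omega

theorem loosePath_dfs_bound_cor (k ℓ r : ℕ) (hk : 3 ≤ k) (hl : 3 ≤ ℓ) (hr2 : 2 ≤ r)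
    (hrk : r ≤ k - 1) (n : ℕ)
    (hn : (k : ℝ) * (ℓ + 1) * r *
        (1 + Real.log (1 + ((r : ℝ) - 1) / ((k : ℝ) - r))) ≤ n)
    (χ : Finset (Fin n) → Fin r) :
    HasMonoLoosePath k ℓ χ :=
  loosePath_dfs_bound_cor_general k ℓ r hr2 hrk n hn χ
end

section
/- Let k ≥ 2, ℓ ≥ 1, and 2 ≤ m ≤ k be integers, and let W_1, …, W_{m−1}, V_m be pairwise disjoint finite sets of vertices. If |W_i| ≥ ℓ for every i = 1, …, m−1, and |V_m| ≥ ℓ(k−m)+1 in case m ≤ k−1 (respectively |V_m| ≥ ℓ in case m = k), then the m-partite complete k-uniform hypergraph K^(k)(W_1, …, W_{m−1}, V_m) contains a copy of the loose path P_ℓ^(k). -/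
/-!
Colour the positions `0, …, (k-1)ℓ` of the path by residues: with `M = k - 1` if `m < k` and
`M = k` if `m = k`, position `p` goes to the part `W j` if `p ≡ j + 1 (mod M)` and to `V`
otherwise (`some j` and `none` in the colour type `Option (Fin (m-1))`). An edge occupies `k`
consecutive positions: for `M = k - 1` this is a full period plus one more position `≡ 0`, for
`M = k` exactly one period. Either way every edge meets each `W j` once and `V` exactly
`k - m + 1` times, and counting the positions of each colour shows that every colour class fits
into its part. Injecting each class into its part then embeds the path.
-/

open Finset Function

section Realization

variable {α β ι : Type*} [DecidableEq ι]

theorem exists_injOn_forall_mem_of_card_filter_le [Nonempty α] (t : Finset β) (c : β → ι)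
    (S : ι → Finset α) (hS : Pairwise (Disjoint on S)) (h : ∀ i, #{x ∈ t | c x = i} ≤ #(S i)) :
    ∃ f : β → α, Set.InjOn f t ∧ ∀ x ∈ t, f x ∈ S (c x) := by
  have hclass (i : ι) : ∃ g : β → α,
      (({x ∈ t | c x = i} : Finset β) : Set β) ⊆ g ⁻¹' S i ∧
        Set.InjOn g (({x ∈ t | c x = i} : Finset β) : Set β) :=
    (finite_toSet _).exists_injOn_of_encard_le (t := (S i : Set α)) (by
      simpa only [Set.encard_coe_eq_coe_finsetCard, Nat.cast_le] using h i)
  choose g hgS hginj using hclass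
  have hmem {x : β} (hx : x ∈ t) : x ∈ ({y ∈ t | c y = c x} : Finset β) := mem_filter.2 ⟨hx, rfl⟩
  refine ⟨fun x ↦ g (c x) x, fun x hx y hy hxy ↦ ?_, fun x hx ↦ hgS (c x) (hmem hx)⟩
  simp only at hxy
  have hc : c x = c y := by
    by_contra hne
    exact disjoint_left.mp (hS hne) (hgS _ (hmem hx)) (hxy ▸ hgS _ (hmem hy))
  rw [hc] at hxy
  exact hginj (c y) (by simpa [hc] using hmem hx) (hmem hy) hxy

theorem card_image_inter_eq_card_filter [DecidableEq α] {f : β → α} {c : β → ι}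
    {S : ι → Finset α} (hS : Pairwise (Disjoint on S)) {e : Finset β} (hinj : Set.InjOn f e)
    (hf : ∀ x ∈ e, f x ∈ S (c x)) (i : ι) : #(e.image f ∩ S i) = #{x ∈ e | c x = i} := by
  have himage : e.image f ∩ S i = {x ∈ e | c x = i}.image f := by
    ext y
    simp only [mem_inter, mem_image, mem_filter]
    constructor
    · rintro ⟨⟨x, hx, rfl⟩, hy⟩
      refine ⟨x, ⟨hx, ?_⟩, rfl⟩
      by_contra hne
      exact disjoint_left.mp (hS hne) (hf x hx) hy
    · rintro ⟨x, ⟨hx, rfl⟩, rfl⟩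
      exact ⟨⟨x, hx, rfl⟩, hf x hx⟩
  rw [himage, card_image_of_injOn (hinj.mono (coe_subset.2 (filter_subset _ _)))]

end Realization

namespace Nat

variable {p : ℕ → Prop} [DecidablePred p] {M : ℕ}

theorem count_mul_of_periodic (hp : Periodic p M) (ℓ : ℕ) : count p (M * ℓ) = ℓ * count p M := by
  induction ℓ with
  | zero => simp
  | succ ℓ ih =>
    have hshift : (fun x ↦ p (M * ℓ + x)) = p := funext fun x ↦ by
      simpa [add_comm, mul_comm] using hp.nat_mul ℓ x
    rw [mul_add_one, count_add, ih, add_one_mul]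
    simp only [hshift]

theorem card_filter_Ico_succ_of_periodic (hp : Periodic p M) (a : ℕ) :
    #{x ∈ Ico a (a + M + 1) | p x} = count p M + if p a then 1 else 0 := by
  rw [Ico_succ_right_eq_insert_Ico (by omega), filter_insert]
  simp only [hp a]
  split_ifs
  · rw [card_insert_of_notMem (by simp), filter_Ico_card_eq_of_periodic a M p hp]
  · rw [filter_Ico_card_eq_of_periodic a M p hp, add_zero]

theorem count_mod_self (q : ℕ → Prop) [DecidablePred q] :
    count (fun x ↦ q (x % M)) M = count q M := by
  simp only [count_eq_card_filter_range]
  exact congrArg card (filter_congr fun x hx ↦ by rw [mod_eq_of_lt (mem_range.1 hx)])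

end Nat

def residueClass (n : ℕ) : ℕ → Option (Fin n)
  | 0 => none
  | j + 1 => if h : j < n then some ⟨j, h⟩ else none

section residueClass

variable {n M : ℕ}

theorem residueClass_eq_none_iff {r : ℕ} : residueClass n r = none ↔ r = 0 ∨ n < r := by
  cases r <;> simp [residueClass]

theorem residueClass_eq_some_iff {r : ℕ} {j : Fin n} : residueClass n r = some j ↔ r = j + 1 := by
  cases r <;> simp [residueClass, Fin.ext_iff, eq_comm]
  rintro rfl
  exact j.2

theorem periodic_residueClass_mod (c : Option (Fin n)) :
    Periodic (fun p ↦ residueClass n (p % M) = c) M :=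
  (Nat.periodic_mod M).comp (residueClass n · = c)

theorem count_residueClass_mod_eq (hnM : n < M) (c : Option (Fin n)) :
    Nat.count (fun p ↦ residueClass n (p % M) = c) M = c.elim (M - n) fun _ ↦ 1 := by
  rw [Nat.count_mod_self (residueClass n · = c), Nat.count_eq_card_filter_range]
  cases c with
  | none =>
    have hclass : {r ∈ range M | residueClass n r = none} = insert 0 (Ioo n M) := by
      ext r
      simp only [mem_filter, mem_range, residueClass_eq_none_iff, mem_insert, mem_Ioo]
      omega
    rw [hclass, card_insert_of_notMem (by simp), Nat.card_Ioo]
    simp only [Option.elim_none]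
    omega
  | some j =>
    have hclass : {r ∈ range M | residueClass n r = some j} = {(j : ℕ) + 1} := by
      ext r
      simp only [mem_filter, mem_range, residueClass_eq_some_iff, mem_singleton]
      have := j.2
      omega
    rw [hclass, card_singleton, Option.elim_some]

theorem card_filter_Ico_residueClass_mod (hnM : n < M) (a : ℕ) (c : Option (Fin n)) :
    #{p ∈ Ico a (a + M) | residueClass n (p % M) = c} = c.elim (M - n) fun _ ↦ 1 := by
  rw [Nat.filter_Ico_card_eq_of_periodic _ _ _ (periodic_residueClass_mod c),
    count_residueClass_mod_eq hnM]

theorem card_filter_Ico_mul_residueClass_mod (hnM : n < M) (i : ℕ) (c : Option (Fin n)) :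
    #{p ∈ Ico (i * M) (i * M + M + 1) | residueClass n (p % M) = c} =
      c.elim (M - n + 1) fun _ ↦ 1 := by
  rw [Nat.card_filter_Ico_succ_of_periodic (periodic_residueClass_mod c),
    count_residueClass_mod_eq hnM, Nat.mul_mod_left]
  cases c <;> simp [residueClass]

theorem card_filter_range_residueClass_mod (hnM : n < M) (ℓ : ℕ) (c : Option (Fin n)) :
    #{p ∈ range (M * ℓ + 1) | residueClass n (p % M) = c} =
      c.elim (ℓ * (M - n) + 1) fun _ ↦ ℓ := by
  rw [← Nat.count_eq_card_filter_range, Nat.count_succ,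
    Nat.count_mul_of_periodic (periodic_residueClass_mod c), count_residueClass_mod_eq hnM,
    Nat.mul_mod_right]
  cases c <;> simp [residueClass]

theorem card_filter_range_residueClass_mod_le (hnM : n < M) {N ℓ : ℕ} (hN : N ≤ M * ℓ)
    (c : Option (Fin n)) :
    #{p ∈ range N | residueClass n (p % M) = c} ≤ ℓ * c.elim (M - n) fun _ ↦ 1 := by
  rw [← Nat.count_eq_card_filter_range, ← count_residueClass_mod_eq hnM,
    ← Nat.count_mul_of_periodic (periodic_residueClass_mod c)]
  exact Nat.count_monotone _ hN

end residueClass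

theorem exists_loosePath_of_colouring {α : Type*} [DecidableEq α] [Nonempty α] {n : ℕ}
    (W : Fin n → Finset α) (V : Finset α) (hWW : Pairwise (Disjoint on W))
    (hWV : ∀ i, Disjoint (W i) V) {k ℓ d : ℕ} (col : ℕ → Option (Fin n))
    (hsize : ∀ c, #{p ∈ range ((k - 1) * ℓ + 1) | col p = c} ≤ #(c.elim V W))
    (hedge : ∀ i < ℓ, ∀ c,
      #{p ∈ Ico (i * (k - 1)) (i * (k - 1) + k) | col p = c} = c.elim d fun _ ↦ 1) :
    ∃ f : ℕ → α, Set.InjOn f (Set.Iio ((k - 1) * ℓ + 1)) ∧ ∀ i < ℓ,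
      (∀ j, #((Ico (i * (k - 1)) (i * (k - 1) + k)).image f ∩ W j) = 1) ∧
      #((Ico (i * (k - 1)) (i * (k - 1) + k)).image f ∩ V) = d := by
  have hS : Pairwise (Disjoint on fun c : Option (Fin n) ↦ c.elim V W) := by
    rintro (_ | i) (_ | j) hij
    · exact absurd rfl hij
    · exact (hWV j).symm
    · exact hWV i
    · exact hWW (Option.some_injective _ |>.ne_iff.1 hij)
  obtain ⟨f, hinj, hf⟩ := exists_injOn_forall_mem_of_card_filter_le _ col _ hS hsize
  refine ⟨f, by simpa using hinj, fun i hi ↦ ?_⟩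
  have hedge_sub : Ico (i * (k - 1)) (i * (k - 1) + k) ⊆ range ((k - 1) * ℓ + 1) := by
    have hnext := Nat.mul_le_mul_right (k - 1) (show i + 1 ≤ ℓ from hi)
    rw [add_one_mul, mul_comm ℓ] at hnext
    rw [range_eq_Ico]
    exact Ico_subset_Ico (Nat.zero_le _) (by omega)
  have hcard := card_image_inter_eq_card_filter hS (hinj.mono (coe_subset.2 hedge_sub))
    (fun x hx ↦ hf x (hedge_sub hx))
  exact ⟨fun j ↦ (hcard (some j)).trans (hedge i hi (some j)),
    (hcard none).trans (hedge i hi none)⟩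

theorem completeMultipartite_contains_loosePath_general {α : Type} [DecidableEq α]
    (k ℓ m : ℕ) (hl : 1 ≤ ℓ) (hm2 : 2 ≤ m) (hmk : m ≤ k)
    (W : Fin (m - 1) → Finset α) (Vm : Finset α)
    (hWW : ∀ i j, i ≠ j → Disjoint (W i) (W j))
    (hWV : ∀ i, Disjoint (W i) Vm)
    (hW : ∀ i, ℓ ≤ (W i).card)
    (hV₁ : m ≤ k - 1 → ℓ * (k - m) + 1 ≤ Vm.card)
    (hV₂ : m = k → ℓ ≤ Vm.card) :
    ∃ f : ℕ → α, Set.InjOn f (Set.Iio ((k - 1) * ℓ + 1)) ∧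
      ∀ i < ℓ,
        (∀ j, ((Finset.Ico (i * (k - 1)) (i * (k - 1) + k)).image f ∩ W j).card = 1) ∧
        ((Finset.Ico (i * (k - 1)) (i * (k - 1) + k)).image f ∩ Vm).card = k - m + 1 := by
  rcases hmk.lt_or_eq with hlt | rfl
  · have hV := hV₁ (by omega)
    have : Nonempty α := (card_pos.1 (by omega : 0 < #Vm)).to_type
    refine exists_loosePath_of_colouring W Vm hWW hWV (fun p ↦ residueClass (m - 1) (p % (k - 1)))
      (fun c ↦ ?_) (fun i _ c ↦ ?_)
    · rw [card_filter_range_residueClass_mod (by omega), show k - 1 - (m - 1) = k - m by omega]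
      cases c
      exacts [hV, hW _]
    · rw [show i * (k - 1) + k = i * (k - 1) + (k - 1) + 1 by omega,
        card_filter_Ico_mul_residueClass_mod (by omega), show k - 1 - (m - 1) = k - m by omega]
  · have hV := hV₂ rfl
    have : Nonempty α := (card_pos.1 (by omega : 0 < #Vm)).to_type
    refine exists_loosePath_of_colouring W Vm hWW hWV (fun p ↦ residueClass (m - 1) (p % m))
      (fun c ↦ ?_) (fun i _ c ↦ ?_)
    · refine (card_filter_range_residueClass_mod_le (ℓ := ℓ) (by omega) ?_ c).trans ?_
      · zify [(by omega : 1 ≤ m)]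
        nlinarith
      · rw [show m - (m - 1) = 1 by omega]
        cases c
        exacts [by simpa using hV, by simpa using hW _]
    · rw [card_filter_Ico_residueClass_mod (by omega), show m - (m - 1) = m - m + 1 by omega]

/-- The complete `m`-partite `k`-uniform hypergraph `K^(k)(W 0, …, W (m-2), Vm)`
(all `k`-element sets with exactly one vertex in each `W i` and `k-m+1` vertices
in `Vm`) contains a copy of the loose path `P_ℓ^(k)`, provided `|W i| ≥ ℓ` for all
`i` and `|Vm| ≥ ℓ(k-m)+1` when `m ≤ k-1`, respectively `|Vm| ≥ ℓ` when `m = k`.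
The copy is given by distinct vertices `f 0, …, f ((k-1)ℓ)`, the `i`-th edge being
`{f (i(k-1)), …, f (i(k-1)+k-1)}`. -/
theorem completeMultipartite_contains_loosePath {α : Type} [DecidableEq α]
    (k ℓ m : ℕ) (hk : 2 ≤ k) (hl : 1 ≤ ℓ) (hm2 : 2 ≤ m) (hmk : m ≤ k)
    (W : Fin (m - 1) → Finset α) (Vm : Finset α)
    (hWW : ∀ i j, i ≠ j → Disjoint (W i) (W j))
    (hWV : ∀ i, Disjoint (W i) Vm)
    (hW : ∀ i, ℓ ≤ (W i).card)
    (hV₁ : m ≤ k - 1 → ℓ * (k - m) + 1 ≤ Vm.card)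
    (hV₂ : m = k → ℓ ≤ Vm.card) :
    ∃ f : ℕ → α, Set.InjOn f (Set.Iio ((k - 1) * ℓ + 1)) ∧
      ∀ i < ℓ,
        (∀ j, ((Finset.Ico (i * (k - 1)) (i * (k - 1) + k)).image f ∩ W j).card = 1) ∧
        ((Finset.Ico (i * (k - 1)) (i * (k - 1) + k)).image f ∩ Vm).card = k - m + 1 :=
  completeMultipartite_contains_loosePath_general k ℓ m hl hm2 hmk W Vm hWW hWV hW hV₁ hV₂
end
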